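/- arXiv:2406.11990 — 5 statements merged into one kernel-verified Lean document; each statement's English description precedes it below -/
import Mathlib

section
/- For α, β ∈ R_Θ one has U(X_α, X_β) = (n_{α,β}/(2 λ_{α+β})) (λ_β − λ_α) X_{α+β} if α + β ∈ R_Θ, and U(X_α, X_β) = 0 otherwise. In particular, 2 g(U(X_α, X_β), X_{−γ}) = n_{α,β} (λ_β − λ_α) when γ = α + β ∈ R_Θ, and 2 g(U(X_α, X_β), X_{−γ}) = 0 for every other γ ∈ R_Θ. -/
/-!
Pair `U(X_α, X_β)` against the dual basis vectors `X_{-γ}`. Since `π_𝔪 [X_μ, X_α]` is a multiple of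
`X_{μ+α}` (or zero), the term `g(π_𝔪 [X_{-γ}, X_α], X_β)` survives only when `γ = α + β`, where it is
`n_{-γ,α} λ_β = n_{α,β} λ_β`; symmetrically the other term is `n_{-γ,β} λ_α = -n_{α,β} λ_α`. This gives
`2 g(U(X_α, X_β), X_{-γ})`, and nondegeneracy of `g` on `𝔪^ℂ` turns it into the formula for
`U(X_α, X_β)`, since `g(X_{α+β}, X_{-γ}) = λ_{α+β} δ_{γ,α+β}`.
-/

theorem eq_of_forall_apply_eq_of_nondegenerate_on_span {R M N ι : Type*} [CommRing R]
    [AddCommGroup M] [Module R M] [AddCommGroup N] [Module R N]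
    {g : M →ₗ[R] M →ₗ[R] N} {X : ι → M} {s : Set ι}
    (hg : ∀ x ∈ Submodule.span R (X '' s), (∀ z ∈ Submodule.span R (X '' s), g x z = 0) → x = 0)
    {v w : M} (hv : v ∈ Submodule.span R (X '' s)) (hw : w ∈ Submodule.span R (X '' s))
    (h : ∀ i ∈ s, g v (X i) = g w (X i)) : v = w := by
  refine sub_eq_zero.mp (hg _ (Submodule.sub_mem _ hv hw) fun z hz => ?_)
  have hzero : Set.EqOn (g (v - w)) (0 : M →ₗ[R] N) (X '' s) := by
    rintro _ ⟨i, hi, rfl⟩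
    simp [h i hi]
  simpa using LinearMap.eqOn_span' hzero hz

theorem neg_mem_of_forall_mem_iff_notMem_addSubgroup {V : Type*} [AddCommGroup V]
    {R S : Finset V} {A : AddSubgroup V} (hRneg : ∀ α ∈ R, -α ∈ R)
    (hS : ∀ α, α ∈ S ↔ α ∈ R ∧ α ∉ A) {δ : V} (hδ : δ ∈ S) : -δ ∈ S := by
  obtain ⟨hδR, hδA⟩ := (hS δ).mp hδ
  exact (hS _).mpr ⟨hRneg δ hδR, fun h => hδA (by simpa using neg_mem h)⟩

theorem structConst_eq_of_add_add_eq_zero {V : Type*} [AddCommGroup V] {n : V → V → ℝ}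
    (hn1 : ∀ α β : V, n α β = - n β α)
    (hn3 : ∀ α β γ : V, α + β + γ = 0 → n α β = n β γ ∧ n β γ = n γ α)
    {α β γ : V} (h : α + β + γ = 0) : n γ α = n α β ∧ n γ β = - n α β := by
  obtain ⟨h₁, h₂⟩ := hn3 α β γ h
  obtain ⟨h₃, h₄⟩ := hn3 β α γ (by rw [add_comm β α]; exact h)
  exact ⟨(h₁.trans h₂).symm, by rw [← h₄, ← h₃, hn1]⟩

section WeylBasis

variable {L : Type*} [LieRing L] [LieAlgebra ℂ L] {V : Type*} [AddCommGroup V] [DecidableEq V]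
  {R RΘ RΘc : Finset V} {X H : V → L} {n : V → V → ℝ} {πm : L →ₗ[ℂ] L}

theorem proj_lie_X_eq
    (hRΘc : ∀ α, α ∈ RΘc ↔ α ∈ R ∧ α ∉ RΘ)
    (hbH : ∀ α ∈ R, ⁅X α, X (-α)⁆ = H α)
    (hbR : ∀ α ∈ R, ∀ β ∈ R, α + β ∈ R → ⁅X α, X β⁆ = (n α β : ℂ) • X (α + β))
    (hb0 : ∀ α ∈ R, ∀ β ∈ R, α + β ∉ R → α + β ≠ 0 → ⁅X α, X β⁆ = (0 : L))
    (hπm1 : ∀ α ∈ RΘc, πm (X α) = X α)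
    (hπm2 : ∀ α ∈ RΘ, πm (X α) = 0)
    (hπm3 : ∀ α ∈ R, πm (H α) = 0)
    {μ α : V} (hμ : μ ∈ R) (hα : α ∈ R) :
    πm ⁅X μ, X α⁆ = if μ + α ∈ RΘc then (n μ α : ℂ) • X (μ + α) else 0 := by
  split_ifs with hc
  · rw [hbR μ hμ α hα ((hRΘc _).mp hc).1, map_smul, hπm1 _ hc]
  by_cases hR : μ + α ∈ R
  · have hΘ : μ + α ∈ RΘ := by simpa [hR] using (hRΘc (μ + α)).not.mp hc
    rw [hbR μ hμ α hα hR, map_smul, hπm2 _ hΘ, smul_zero]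
  by_cases h0 : μ + α = 0
  · obtain rfl : α = -μ := eq_neg_of_add_eq_zero_right h0
    rw [hbH μ hμ, hπm3 μ hμ]
  · rw [hb0 μ hμ α hα hR h0, map_zero]

variable {lam : V → ℝ} {g : L →ₗ[ℂ] L →ₗ[ℂ] ℂ}

theorem apply_proj_lie_X_X_eq
    (hneg : ∀ α ∈ RΘc, -α ∈ RΘc) (hlam : ∀ α : V, lam (-α) = lam α)
    (hg : ∀ α ∈ RΘc, ∀ β ∈ RΘc, g (X α) (X β) = if β = -α then (lam α : ℂ) else 0)
    {μ α β : V} (hβ : β ∈ RΘc)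
    (hproj : πm ⁅X μ, X α⁆ = if μ + α ∈ RΘc then (n μ α : ℂ) • X (μ + α) else 0) :
    g (πm ⁅X μ, X α⁆) (X β) = if μ + α + β = 0 then ((n μ α * lam β : ℝ) : ℂ) else 0 := by
  have hsum : β = -(μ + α) ↔ μ + α + β = 0 := by rw [eq_neg_iff_add_eq_zero, add_comm]
  rw [hproj]
  split_ifs with hc hz hz
  · have hμα : μ + α = -β := eq_neg_of_add_eq_zero_left hz
    rw [map_smul, LinearMap.smul_apply, hg _ hc _ hβ, if_pos (by rw [hμα, neg_neg]), hμα, hlam,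
      smul_eq_mul]
    push_cast
    ring
  · rw [map_smul, LinearMap.smul_apply, hg _ hc _ hβ, if_neg (hsum.not.mpr hz), smul_zero]
  · exact absurd (eq_neg_of_add_eq_zero_left hz ▸ hneg β hβ) hc
  · simp

theorem two_mul_apply_U_X_neg_eq {U : L →ₗ[ℂ] L →ₗ[ℂ] L}
    (hgsym : ∀ x y : L, g x y = g y x)
    (hU : ∀ x ∈ Submodule.span ℂ (X '' (RΘc : Set V)),
          ∀ y ∈ Submodule.span ℂ (X '' (RΘc : Set V)),
          ∀ z ∈ Submodule.span ℂ (X '' (RΘc : Set V)),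
      (2 : ℂ) * g (U x y) z = g (πm ⁅z, x⁆) y + g x (πm ⁅z, y⁆))
    (hpair : ∀ μ ∈ RΘc, ∀ α ∈ RΘc, ∀ β ∈ RΘc,
      g (πm ⁅X μ, X α⁆) (X β) = if μ + α + β = 0 then ((n μ α * lam β : ℝ) : ℂ) else 0)
    (hn1 : ∀ α β : V, n α β = - n β α)
    (hn3 : ∀ α β γ : V, α + β + γ = 0 → n α β = n β γ ∧ n β γ = n γ α)
    (hneg : ∀ α ∈ RΘc, -α ∈ RΘc) {α β γ : V} (hα : α ∈ RΘc) (hβ : β ∈ RΘc) (hγ : γ ∈ RΘc) :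
    (2 : ℂ) * g (U (X α) (X β)) (X (-γ))
      = if γ = α + β then ((n α β * (lam β - lam α) : ℝ) : ℂ) else 0 := by
  have hmem : ∀ {δ}, δ ∈ RΘc → X δ ∈ Submodule.span ℂ (X '' (RΘc : Set V)) :=
    fun hδ => Submodule.subset_span ⟨_, hδ, rfl⟩
  have hαβ : -γ + α + β = 0 ↔ γ = α + β := by rw [add_assoc, neg_add_eq_zero]
  have hβα : -γ + β + α = 0 ↔ γ = α + β := by rw [add_right_comm, hαβ]
  rw [hU _ (hmem hα) _ (hmem hβ) _ (hmem (hneg γ hγ)), hgsym (X α),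
    hpair (-γ) (hneg γ hγ) α hα β hβ, hpair (-γ) (hneg γ hγ) β hβ α hα]
  by_cases hc : γ = α + β
  · obtain ⟨hnα, hnβ⟩ := structConst_eq_of_add_add_eq_zero (α := α) (β := β) (γ := -γ) hn1 hn3
      (by rw [hc]; abel)
    rw [if_pos (hαβ.mpr hc), if_pos (hβα.mpr hc), if_pos hc, hnα, hnβ]
    push_cast
    ring
  · rw [if_neg (hαβ.not.mpr hc), if_neg (hβα.not.mpr hc), if_neg hc, add_zero]

theorem eq_of_two_mul_apply_X_neg_eq (hneg : ∀ α ∈ RΘc, -α ∈ RΘc)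
    (hlam : ∀ α ∈ RΘc, 0 < lam α)
    (hg : ∀ α ∈ RΘc, ∀ β ∈ RΘc, g (X α) (X β) = if β = -α then (lam α : ℂ) else 0)
    (hgnd : ∀ x ∈ Submodule.span ℂ (X '' (RΘc : Set V)),
      (∀ z ∈ Submodule.span ℂ (X '' (RΘc : Set V)), g x z = 0) → x = 0)
    {w : L} {ν : V} {c : ℝ} (hw : w ∈ Submodule.span ℂ (X '' (RΘc : Set V)))
    (hpair : ∀ γ ∈ RΘc, (2 : ℂ) * g w (X (-γ)) = if γ = ν then (c : ℂ) else 0) :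
    (ν ∈ RΘc → w = ((c / (2 * lam ν) : ℝ) : ℂ) • X ν) ∧ (ν ∉ RΘc → w = 0) := by
  have hwX : ∀ δ ∈ RΘc, g w (X δ) = if δ = -ν then (c : ℂ) / 2 else 0 := by
    intro δ hδ
    have h := hpair (-δ) (hneg δ hδ)
    simp only [neg_neg, neg_eq_iff_eq_neg] at h
    split_ifs at h ⊢ <;> linear_combination h / 2
  refine ⟨fun hν => ?_, fun hν => ?_⟩
  · refine eq_of_forall_apply_eq_of_nondegenerate_on_span hgnd hw
      (Submodule.smul_mem _ _ (Submodule.subset_span ⟨_, hν, rfl⟩)) fun δ hδ => ?_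
    have hlamν : (lam ν : ℂ) ≠ 0 := by exact_mod_cast (hlam ν hν).ne'
    rw [hwX δ hδ, map_smul, LinearMap.smul_apply, hg _ hν _ hδ, smul_eq_mul]
    split_ifs
    · push_cast
      field_simp
    · rw [mul_zero]
  · refine eq_of_forall_apply_eq_of_nondegenerate_on_span hgnd hw (Submodule.zero_mem _)
      fun δ hδ => ?_
    rw [hwX δ hδ, if_neg fun h => hν (by simpa [h] using hneg δ hδ), map_zero,
      LinearMap.zero_apply]

end WeylBasis

theorem stmt6_general
    (L : Type*) [LieRing L] [LieAlgebra ℂ L]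
    (V : Type*) [AddCommGroup V] [DecidableEq V]
    (R : Finset V) (hRneg : ∀ α ∈ R, -α ∈ R)
    (Θ : Finset V)
    (RΘ : Finset V)
    (hRΘ : ∀ α, α ∈ RΘ ↔ α ∈ R ∧ α ∈ AddSubgroup.closure (Θ : Set V))
    (RΘc : Finset V) (hRΘc : ∀ α, α ∈ RΘc ↔ α ∈ R ∧ α ∉ RΘ)
    (X H : V → L) (n : V → V → ℝ)
    (hbH : ∀ α ∈ R, ⁅X α, X (-α)⁆ = H α)
    (hbR : ∀ α ∈ R, ∀ β ∈ R, α + β ∈ R → ⁅X α, X β⁆ = (n α β : ℂ) • X (α + β))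
    (hb0 : ∀ α ∈ R, ∀ β ∈ R, α + β ∉ R → α + β ≠ 0 → ⁅X α, X β⁆ = (0 : L))
    (hn1 : ∀ α β : V, n α β = - n β α)
    (hn3 : ∀ α β γ : V, α + β + γ = 0 → n α β = n β γ ∧ n β γ = n γ α)
    (πm : L →ₗ[ℂ] L)
    (hπm1 : ∀ α ∈ RΘc, πm (X α) = X α)
    (hπm2 : ∀ α ∈ RΘ, πm (X α) = 0)
    (hπm3 : ∀ α ∈ R, πm (H α) = 0)
    (lam : V → ℝ) (hlam1 : ∀ α ∈ RΘc, 0 < lam α) (hlam2 : ∀ α : V, lam (-α) = lam α)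
    (g : L →ₗ[ℂ] L →ₗ[ℂ] ℂ) (hgsym : ∀ x y : L, g x y = g y x)
    (hg : ∀ α ∈ RΘc, ∀ β ∈ RΘc, g (X α) (X β) = if β = -α then (lam α : ℂ) else 0)
    (hgnd : ∀ x ∈ Submodule.span ℂ (X '' (RΘc : Set V)),
      (∀ z ∈ Submodule.span ℂ (X '' (RΘc : Set V)), g x z = 0) → x = 0)
    (U : L →ₗ[ℂ] L →ₗ[ℂ] L)
    (hUmem : ∀ x y : L, U x y ∈ Submodule.span ℂ (X '' (RΘc : Set V)))
    (hU : ∀ x ∈ Submodule.span ℂ (X '' (RΘc : Set V)),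
          ∀ y ∈ Submodule.span ℂ (X '' (RΘc : Set V)),
          ∀ z ∈ Submodule.span ℂ (X '' (RΘc : Set V)),
      (2 : ℂ) * g (U x y) z = g (πm ⁅z, x⁆) y + g x (πm ⁅z, y⁆))
    :
    ∀ α ∈ RΘc, ∀ β ∈ RΘc,
      ((α + β ∈ RΘc →
          U (X α) (X β)
            = ((n α β / (2 * lam (α + β)) * (lam β - lam α) : ℝ) : ℂ) • X (α + β)) ∧
       (α + β ∉ RΘc → U (X α) (X β) = 0)) ∧
      ∀ γ ∈ RΘc,
        (γ = α + β → (2 : ℂ) * g (U (X α) (X β)) (X (-γ))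
            = ((n α β * (lam β - lam α) : ℝ) : ℂ)) ∧
        (γ ≠ α + β → (2 : ℂ) * g (U (X α) (X β)) (X (-γ)) = 0) := by
  have hneg : ∀ α ∈ RΘc, -α ∈ RΘc := fun α =>
    neg_mem_of_forall_mem_iff_notMem_addSubgroup hRneg (A := AddSubgroup.closure (Θ : Set V))
      (fun β => by rw [hRΘc, hRΘ]; tauto)
  have hR : ∀ {α}, α ∈ RΘc → α ∈ R := fun hα => ((hRΘc _).mp hα).1
  have hpair : ∀ μ ∈ RΘc, ∀ α ∈ RΘc, ∀ β ∈ RΘc,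
      g (πm ⁅X μ, X α⁆) (X β) = if μ + α + β = 0 then ((n μ α * lam β : ℝ) : ℂ) else 0 :=
    fun μ hμ α hα β hβ => apply_proj_lie_X_X_eq hneg hlam2 hg hβ
      (proj_lie_X_eq hRΘc hbH hbR hb0 hπm1 hπm2 hπm3 (hR hμ) (hR hα))
  intro α hα β hβ
  have hkey : ∀ γ ∈ RΘc, (2 : ℂ) * g (U (X α) (X β)) (X (-γ))
      = if γ = α + β then ((n α β * (lam β - lam α) : ℝ) : ℂ) else 0 :=
    fun γ hγ => two_mul_apply_U_X_neg_eq hgsym hU hpair hn1 hn3 hneg hα hβ hγ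
  rw [div_mul_eq_mul_div]
  refine ⟨eq_of_two_mul_apply_X_neg_eq hneg hlam1 hg hgnd (hUmem _ _) hkey,
    fun γ hγ => ⟨fun hc => ?_, fun hc => ?_⟩⟩
  · rw [hkey γ hγ, if_pos hc]
  · rw [hkey γ hγ, if_neg hc]

theorem stmt6
    (L : Type*) [LieRing L] [LieAlgebra ℂ L]
    (V : Type*) [AddCommGroup V] [DecidableEq V]
    (R : Finset V) (hR0 : (0 : V) ∉ R) (hRneg : ∀ α ∈ R, -α ∈ R)
    (Rpos : Finset V) (hposR : Rpos ⊆ R)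
    (hposneg : ∀ α ∈ R, α ∈ Rpos ↔ -α ∉ Rpos)
    (Sig : Finset V) (hSigpos : Sig ⊆ Rpos)
    (Θ : Finset V) (hΘSig : Θ ⊆ Sig)
    (RΘ : Finset V)
    (hRΘ : ∀ α, α ∈ RΘ ↔ α ∈ R ∧ α ∈ AddSubgroup.closure (Θ : Set V))
    (RΘc : Finset V) (hRΘc : ∀ α, α ∈ RΘc ↔ α ∈ R ∧ α ∉ RΘ)
    (X H : V → L) (n : V → V → ℝ)
    (hbH : ∀ α ∈ R, ⁅X α, X (-α)⁆ = H α)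
    (hbR : ∀ α ∈ R, ∀ β ∈ R, α + β ∈ R → ⁅X α, X β⁆ = (n α β : ℂ) • X (α + β))
    (hb0 : ∀ α ∈ R, ∀ β ∈ R, α + β ∉ R → α + β ≠ 0 → ⁅X α, X β⁆ = (0 : L))
    (hn1 : ∀ α β : V, n α β = - n β α)
    (hn2 : ∀ α β : V, n α β = - n (-α) (-β))
    (hn3 : ∀ α β γ : V, α + β + γ = 0 → n α β = n β γ ∧ n β γ = n γ α)
    (πm : L →ₗ[ℂ] L)
    (hπm1 : ∀ α ∈ RΘc, πm (X α) = X α)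
    (hπm2 : ∀ α ∈ RΘ, πm (X α) = 0)
    (hπm3 : ∀ α ∈ R, πm (H α) = 0)
    (lam : V → ℝ) (hlam1 : ∀ α ∈ RΘc, 0 < lam α) (hlam2 : ∀ α : V, lam (-α) = lam α)
    (g : L →ₗ[ℂ] L →ₗ[ℂ] ℂ) (hgsym : ∀ x y : L, g x y = g y x)
    (hg : ∀ α ∈ RΘc, ∀ β ∈ RΘc, g (X α) (X β) = if β = -α then (lam α : ℂ) else 0)
    (hgnd : ∀ x ∈ Submodule.span ℂ (X '' (RΘc : Set V)),
      (∀ z ∈ Submodule.span ℂ (X '' (RΘc : Set V)), g x z = 0) → x = 0)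
    (U : L →ₗ[ℂ] L →ₗ[ℂ] L) (hUsym : ∀ x y : L, U x y = U y x)
    (hUmem : ∀ x y : L, U x y ∈ Submodule.span ℂ (X '' (RΘc : Set V)))
    (hU : ∀ x ∈ Submodule.span ℂ (X '' (RΘc : Set V)),
          ∀ y ∈ Submodule.span ℂ (X '' (RΘc : Set V)),
          ∀ z ∈ Submodule.span ℂ (X '' (RΘc : Set V)),
      (2 : ℂ) * g (U x y) z = g (πm ⁅z, x⁆) y + g x (πm ⁅z, y⁆))
    :
    ∀ α ∈ RΘc, ∀ β ∈ RΘc,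
      ((α + β ∈ RΘc →
          U (X α) (X β)
            = ((n α β / (2 * lam (α + β)) * (lam β - lam α) : ℝ) : ℂ) • X (α + β)) ∧
       (α + β ∉ RΘc → U (X α) (X β) = 0)) ∧
      ∀ γ ∈ RΘc,
        (γ = α + β → (2 : ℂ) * g (U (X α) (X β)) (X (-γ))
            = ((n α β * (lam β - lam α) : ℝ) : ℂ)) ∧
        (γ ≠ α + β → (2 : ℂ) * g (U (X α) (X β)) (X (-γ)) = 0) :=
  stmt6_general L V R hRneg Θ RΘ hRΘ RΘc hRΘc X H n hbH hbR hb0 hn1 hn3 πm hπm1 hπm2 hπm3 lam hlam1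
    hlam2 g hgsym hg hgnd U hUmem hU
end

section
/- For α, β ∈ R_Θ one has ∇(X_α, X_β) := −(1/2) π_𝔪[X_α, X_β] + U(X_α, X_β) = r_{α,β} X_{α+β} if α + β ∈ R_Θ, where r_{α,β} = (n_{β,α}/(2 λ_{α+β})) (λ_{α+β} + λ_α − λ_β), and ∇(X_α, X_β) = 0 otherwise. -/
/-!
Pairing with the basis vectors `X γ`, `γ ∈ R_Θ`, determines vectors of `𝔪^ℂ` because `g` is
nondegenerate there. For basis vectors the defining identity of `U` reduces to
`g(π_𝔪[X_γ, X_α], X_β) = n_{γ,α} λ_β` when `α + β + γ = 0` (and `0` otherwise), so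
`2 g(U(X_α, X_β), X_γ)` vanishes unless `γ = -(α + β)`, where the cyclic symmetry of the
structure constants turns it into `n_{β,α} (λ_α - λ_β)`. Adding `-(1/2) π_𝔪[X_α, X_β]` gives `r_{α,β}`.
-/

theorem neg_mem_of_mem_compl {V : Type*} [AddCommGroup V] {R RΘ RΘc : Finset V}
    {K : AddSubgroup V} (hRneg : ∀ α ∈ R, -α ∈ R) (hRΘ : ∀ α, α ∈ RΘ ↔ α ∈ R ∧ α ∈ K)
    (hRΘc : ∀ α, α ∈ RΘc ↔ α ∈ R ∧ α ∉ RΘ) {α : V} (hα : α ∈ RΘc) : -α ∈ RΘc := by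
  obtain ⟨hαR, hαΘ⟩ := (hRΘc α).1 hα
  refine (hRΘc (-α)).2 ⟨hRneg α hαR, fun hnegΘ => hαΘ ((hRΘ α).2 ⟨hαR, ?_⟩)⟩
  simpa using neg_mem ((hRΘ (-α)).1 hnegΘ).2

theorem eq_of_forall_apply_eq_of_nondegenerate {K M : Type*} [CommRing K] [AddCommGroup M]
    [Module K M] (g : M →ₗ[K] M →ₗ[K] K) {S : Set M}
    (hgnd : ∀ x ∈ Submodule.span K S, (∀ z ∈ Submodule.span K S, g x z = 0) → x = 0)
    {u w : M} (hu : u ∈ Submodule.span K S) (hw : w ∈ Submodule.span K S)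
    (h : ∀ v ∈ S, g u v = g w v) : u = w := by
  refine sub_eq_zero.mp (hgnd _ (Submodule.sub_mem _ hu hw) fun z hz => ?_)
  rw [map_sub, LinearMap.sub_apply, sub_eq_zero]
  exact LinearMap.eqOn_span h hz

theorem structure_const_of_add_add_eq_zero {V : Type*} [AddCommGroup V] {n : V → V → ℝ}
    (hn1 : ∀ α β : V, n α β = - n β α)
    (hn3 : ∀ α β γ : V, α + β + γ = 0 → n α β = n β γ ∧ n β γ = n γ α)
    {α β γ : V} (h : α + β + γ = 0) : n γ α = - n β α ∧ n γ β = n β α := by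
  obtain ⟨hαβ, hβγ⟩ := hn3 α β γ h
  refine ⟨by rw [← hβγ, ← hαβ, hn1], (hn3 γ β α ?_).1⟩
  rw [← h]
  abel

section WeylBasis

variable {L : Type*} [LieRing L] [LieAlgebra ℂ L] {V : Type*} [AddCommGroup V] [DecidableEq V]
  {R RΘ RΘc : Finset V} {X H : V → L} {n : V → V → ℝ} {πm : L →ₗ[ℂ] L} {lam : V → ℝ}
  {g : L →ₗ[ℂ] L →ₗ[ℂ] ℂ}

theorem projection_lie_basis (hRΘc : ∀ α, α ∈ RΘc ↔ α ∈ R ∧ α ∉ RΘ)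
    (hbH : ∀ α ∈ R, ⁅X α, X (-α)⁆ = H α)
    (hbR : ∀ α ∈ R, ∀ β ∈ R, α + β ∈ R → ⁅X α, X β⁆ = (n α β : ℂ) • X (α + β))
    (hb0 : ∀ α ∈ R, ∀ β ∈ R, α + β ∉ R → α + β ≠ 0 → ⁅X α, X β⁆ = (0 : L))
    (hπm1 : ∀ α ∈ RΘc, πm (X α) = X α) (hπm2 : ∀ α ∈ RΘ, πm (X α) = 0)
    (hπm3 : ∀ α ∈ R, πm (H α) = 0) {α β : V} (hα : α ∈ R) (hβ : β ∈ R) :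
    πm ⁅X α, X β⁆ = if α + β ∈ RΘc then (n α β : ℂ) • X (α + β) else 0 := by
  by_cases hR : α + β ∈ R
  · rw [hbR α hα β hβ hR, map_smul]
    split_ifs with hc
    · rw [hπm1 _ hc]
    · have hΘ : α + β ∈ RΘ := by
        by_contra hΘ
        exact hc ((hRΘc _).2 ⟨hR, hΘ⟩)
      rw [hπm2 _ hΘ, smul_zero]
  · rw [if_neg fun hc => hR ((hRΘc _).1 hc).1]
    by_cases h0 : α + β = 0
    · rw [← neg_eq_of_add_eq_zero_right h0, hbH α hα, hπm3 α hα]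
    · rw [hb0 α hα β hβ hR h0, map_zero]

theorem pairing_projection_lie_basis (hneg : ∀ α ∈ RΘc, -α ∈ RΘc)
    (hlam2 : ∀ α : V, lam (-α) = lam α)
    (hg : ∀ α ∈ RΘc, ∀ β ∈ RΘc, g (X α) (X β) = if β = -α then (lam α : ℂ) else 0)
    (hπ : ∀ α ∈ RΘc, ∀ β ∈ RΘc,
      πm ⁅X α, X β⁆ = if α + β ∈ RΘc then (n α β : ℂ) • X (α + β) else 0)
    {α β γ : V} (hα : α ∈ RΘc) (hβ : β ∈ RΘc) (hγ : γ ∈ RΘc) :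
    g (πm ⁅X α, X β⁆) (X γ) = if α + β + γ = 0 then ((n α β * lam γ : ℝ) : ℂ) else 0 := by
  rw [hπ α hα β hβ]
  by_cases hsum : α + β + γ = 0
  · have hab : α + β = -γ := eq_neg_of_add_eq_zero_left hsum
    rw [if_pos hsum, hab, if_pos (hneg γ hγ), map_smul, LinearMap.smul_apply,
      hg _ (hneg γ hγ) _ hγ, if_pos (neg_neg γ).symm, hlam2, smul_eq_mul, Complex.ofReal_mul]
  · have hγ' : γ ≠ -(α + β) := fun h => hsum (by rw [h]; abel)
    rw [if_neg hsum]
    split_ifs with hab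
    · rw [map_smul, LinearMap.smul_apply, hg _ hab _ hγ, if_neg hγ', smul_zero]
    · rw [map_zero, LinearMap.zero_apply]

theorem U_lie_basis (hneg : ∀ α ∈ RΘc, -α ∈ RΘc) (hlam1 : ∀ α ∈ RΘc, 0 < lam α)
    (hn1 : ∀ α β : V, n α β = - n β α)
    (hn3 : ∀ α β γ : V, α + β + γ = 0 → n α β = n β γ ∧ n β γ = n γ α)
    (hgsym : ∀ x y : L, g x y = g y x)
    (hg : ∀ α ∈ RΘc, ∀ β ∈ RΘc, g (X α) (X β) = if β = -α then (lam α : ℂ) else 0)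
    (hgnd : ∀ x ∈ Submodule.span ℂ (X '' (RΘc : Set V)),
      (∀ z ∈ Submodule.span ℂ (X '' (RΘc : Set V)), g x z = 0) → x = 0)
    (U : L →ₗ[ℂ] L →ₗ[ℂ] L)
    (hUmem : ∀ x y : L, U x y ∈ Submodule.span ℂ (X '' (RΘc : Set V)))
    (hU : ∀ x ∈ Submodule.span ℂ (X '' (RΘc : Set V)),
          ∀ y ∈ Submodule.span ℂ (X '' (RΘc : Set V)),
          ∀ z ∈ Submodule.span ℂ (X '' (RΘc : Set V)),
      (2 : ℂ) * g (U x y) z = g (πm ⁅z, x⁆) y + g x (πm ⁅z, y⁆))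
    (hpair : ∀ α ∈ RΘc, ∀ β ∈ RΘc, ∀ γ ∈ RΘc,
      g (πm ⁅X α, X β⁆) (X γ) = if α + β + γ = 0 then ((n α β * lam γ : ℝ) : ℂ) else 0)
    {α β : V} (hα : α ∈ RΘc) (hβ : β ∈ RΘc) :
    U (X α) (X β) = if α + β ∈ RΘc then
      ((n β α * (lam α - lam β) / (2 * lam (α + β)) : ℝ) : ℂ) • X (α + β) else 0 := by
  have hX : ∀ γ ∈ RΘc, X γ ∈ Submodule.span ℂ (X '' (RΘc : Set V)) :=
    fun γ hγ => Submodule.subset_span ⟨γ, hγ, rfl⟩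
  refine eq_of_forall_apply_eq_of_nondegenerate g hgnd (hUmem _ _) ?_ ?_
  · split_ifs with hab
    exacts [Submodule.smul_mem _ _ (hX _ hab), zero_mem _]
  rintro _ ⟨γ, hγ, rfl⟩
  refine mul_left_cancel₀ two_ne_zero ?_
  rw [hU _ (hX α hα) _ (hX β hβ) _ (hX γ hγ), hgsym (X α), hpair γ hγ α hα β hβ,
    hpair γ hγ β hβ α hα, show γ + α + β = α + β + γ by abel, show γ + β + α = α + β + γ by abel]
  by_cases hsum : α + β + γ = 0
  · have hab : α + β = -γ := eq_neg_of_add_eq_zero_left hsum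
    obtain ⟨hγα, hγβ⟩ := structure_const_of_add_add_eq_zero hn1 hn3 hsum
    have habc : α + β ∈ RΘc := hab ▸ hneg γ hγ
    have hl : (lam (α + β) : ℂ) ≠ 0 := by exact_mod_cast (hlam1 _ habc).ne'
    rw [if_pos hsum, if_pos hsum, if_pos habc, map_smul, LinearMap.smul_apply, hg _ habc _ hγ,
      if_pos (by rw [hab, neg_neg]),
      smul_eq_mul, hγα, hγβ]
    push_cast
    field_simp
    ring
  · have hγ' : γ ≠ -(α + β) := fun h => hsum (by rw [h]; abel)
    rw [if_neg hsum, if_neg hsum, add_zero]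
    split_ifs with hab
    · rw [map_smul, LinearMap.smul_apply, hg _ hab _ hγ, if_neg hγ', smul_zero, mul_zero]
    · rw [map_zero, LinearMap.zero_apply, mul_zero]

end WeylBasis

theorem stmt7_general
    (L : Type*) [LieRing L] [LieAlgebra ℂ L]
    (V : Type*) [AddCommGroup V] [DecidableEq V]
    (R : Finset V) (hRneg : ∀ α ∈ R, -α ∈ R)
    (Θ : Finset V)
    (RΘ : Finset V)
    (hRΘ : ∀ α, α ∈ RΘ ↔ α ∈ R ∧ α ∈ AddSubgroup.closure (Θ : Set V))
    (RΘc : Finset V) (hRΘc : ∀ α, α ∈ RΘc ↔ α ∈ R ∧ α ∉ RΘ)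
    (X H : V → L) (n : V → V → ℝ)
    (hbH : ∀ α ∈ R, ⁅X α, X (-α)⁆ = H α)
    (hbR : ∀ α ∈ R, ∀ β ∈ R, α + β ∈ R → ⁅X α, X β⁆ = (n α β : ℂ) • X (α + β))
    (hb0 : ∀ α ∈ R, ∀ β ∈ R, α + β ∉ R → α + β ≠ 0 → ⁅X α, X β⁆ = (0 : L))
    (hn1 : ∀ α β : V, n α β = - n β α)
    (hn3 : ∀ α β γ : V, α + β + γ = 0 → n α β = n β γ ∧ n β γ = n γ α)
    (πm : L →ₗ[ℂ] L)
    (hπm1 : ∀ α ∈ RΘc, πm (X α) = X α)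
    (hπm2 : ∀ α ∈ RΘ, πm (X α) = 0)
    (hπm3 : ∀ α ∈ R, πm (H α) = 0)
    (lam : V → ℝ) (hlam1 : ∀ α ∈ RΘc, 0 < lam α) (hlam2 : ∀ α : V, lam (-α) = lam α)
    (g : L →ₗ[ℂ] L →ₗ[ℂ] ℂ) (hgsym : ∀ x y : L, g x y = g y x)
    (hg : ∀ α ∈ RΘc, ∀ β ∈ RΘc, g (X α) (X β) = if β = -α then (lam α : ℂ) else 0)
    (hgnd : ∀ x ∈ Submodule.span ℂ (X '' (RΘc : Set V)),
      (∀ z ∈ Submodule.span ℂ (X '' (RΘc : Set V)), g x z = 0) → x = 0)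
    (U : L →ₗ[ℂ] L →ₗ[ℂ] L)
    (hUmem : ∀ x y : L, U x y ∈ Submodule.span ℂ (X '' (RΘc : Set V)))
    (hU : ∀ x ∈ Submodule.span ℂ (X '' (RΘc : Set V)),
          ∀ y ∈ Submodule.span ℂ (X '' (RΘc : Set V)),
          ∀ z ∈ Submodule.span ℂ (X '' (RΘc : Set V)),
      (2 : ℂ) * g (U x y) z = g (πm ⁅z, x⁆) y + g x (πm ⁅z, y⁆))
    :
    ∀ α ∈ RΘc, ∀ β ∈ RΘc,
      (α + β ∈ RΘc →
        -(1/2 : ℂ) • πm ⁅X α, X β⁆ + U (X α) (X β)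
          = ((n β α / (2 * lam (α + β)) * (lam (α + β) + lam α - lam β) : ℝ) : ℂ)
              • X (α + β)) ∧
      (α + β ∉ RΘc →
        -(1/2 : ℂ) • πm ⁅X α, X β⁆ + U (X α) (X β) = 0) := by
  have hneg : ∀ α ∈ RΘc, -α ∈ RΘc := fun _ => neg_mem_of_mem_compl hRneg hRΘ hRΘc
  have hπ : ∀ α ∈ RΘc, ∀ β ∈ RΘc,
      πm ⁅X α, X β⁆ = if α + β ∈ RΘc then (n α β : ℂ) • X (α + β) else 0 :=
    fun α hα β hβ => projection_lie_basis hRΘc hbH hbR hb0 hπm1 hπm2 hπm3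
      ((hRΘc α).1 hα).1 ((hRΘc β).1 hβ).1
  have hpair := fun α (hα : α ∈ RΘc) β (hβ : β ∈ RΘc) γ (hγ : γ ∈ RΘc) =>
    pairing_projection_lie_basis (g := g) hneg hlam2 hg hπ hα hβ hγ
  intro α hα β hβ
  rw [hπ α hα β hβ, U_lie_basis hneg hlam1 hn1 hn3 hgsym hg hgnd U hUmem hU hpair hα hβ]
  refine ⟨fun hab => ?_, fun hab => by simp only [if_neg hab, smul_zero, add_zero]⟩
  have hl : (lam (α + β) : ℂ) ≠ 0 := by exact_mod_cast (hlam1 _ hab).ne'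
  rw [if_pos hab, if_pos hab, smul_smul, ← add_smul, hn1 α β]
  congr 1
  push_cast
  field_simp
  ring

theorem stmt7
    (L : Type*) [LieRing L] [LieAlgebra ℂ L]
    (V : Type*) [AddCommGroup V] [DecidableEq V]
    (R : Finset V) (hR0 : (0 : V) ∉ R) (hRneg : ∀ α ∈ R, -α ∈ R)
    (Rpos : Finset V) (hposR : Rpos ⊆ R)
    (hposneg : ∀ α ∈ R, α ∈ Rpos ↔ -α ∉ Rpos)
    (Sig : Finset V) (hSigpos : Sig ⊆ Rpos)
    (Θ : Finset V) (hΘSig : Θ ⊆ Sig)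
    (RΘ : Finset V)
    (hRΘ : ∀ α, α ∈ RΘ ↔ α ∈ R ∧ α ∈ AddSubgroup.closure (Θ : Set V))
    (RΘc : Finset V) (hRΘc : ∀ α, α ∈ RΘc ↔ α ∈ R ∧ α ∉ RΘ)
    (X H : V → L) (n : V → V → ℝ)
    (hbH : ∀ α ∈ R, ⁅X α, X (-α)⁆ = H α)
    (hbR : ∀ α ∈ R, ∀ β ∈ R, α + β ∈ R → ⁅X α, X β⁆ = (n α β : ℂ) • X (α + β))
    (hb0 : ∀ α ∈ R, ∀ β ∈ R, α + β ∉ R → α + β ≠ 0 → ⁅X α, X β⁆ = (0 : L))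
    (hn1 : ∀ α β : V, n α β = - n β α)
    (hn2 : ∀ α β : V, n α β = - n (-α) (-β))
    (hn3 : ∀ α β γ : V, α + β + γ = 0 → n α β = n β γ ∧ n β γ = n γ α)
    (πm : L →ₗ[ℂ] L)
    (hπm1 : ∀ α ∈ RΘc, πm (X α) = X α)
    (hπm2 : ∀ α ∈ RΘ, πm (X α) = 0)
    (hπm3 : ∀ α ∈ R, πm (H α) = 0)
    (lam : V → ℝ) (hlam1 : ∀ α ∈ RΘc, 0 < lam α) (hlam2 : ∀ α : V, lam (-α) = lam α)
    (g : L →ₗ[ℂ] L →ₗ[ℂ] ℂ) (hgsym : ∀ x y : L, g x y = g y x)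
    (hg : ∀ α ∈ RΘc, ∀ β ∈ RΘc, g (X α) (X β) = if β = -α then (lam α : ℂ) else 0)
    (hgnd : ∀ x ∈ Submodule.span ℂ (X '' (RΘc : Set V)),
      (∀ z ∈ Submodule.span ℂ (X '' (RΘc : Set V)), g x z = 0) → x = 0)
    (U : L →ₗ[ℂ] L →ₗ[ℂ] L) (hUsym : ∀ x y : L, U x y = U y x)
    (hUmem : ∀ x y : L, U x y ∈ Submodule.span ℂ (X '' (RΘc : Set V)))
    (hU : ∀ x ∈ Submodule.span ℂ (X '' (RΘc : Set V)),
          ∀ y ∈ Submodule.span ℂ (X '' (RΘc : Set V)),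
          ∀ z ∈ Submodule.span ℂ (X '' (RΘc : Set V)),
      (2 : ℂ) * g (U x y) z = g (πm ⁅z, x⁆) y + g x (πm ⁅z, y⁆))
    :
    ∀ α ∈ RΘc, ∀ β ∈ RΘc,
      (α + β ∈ RΘc →
        -(1/2 : ℂ) • πm ⁅X α, X β⁆ + U (X α) (X β)
          = ((n β α / (2 * lam (α + β)) * (lam (α + β) + lam α - lam β) : ℝ) : ℂ)
              • X (α + β)) ∧
      (α + β ∉ RΘc →
        -(1/2 : ℂ) • πm ⁅X α, X β⁆ + U (X α) (X β) = 0) :=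
  stmt7_general L V R hRneg Θ RΘ hRΘ RΘc hRΘc X H n hbH hbR hb0 hn1 hn3 πm hπm1 hπm2 hπm3 lam hlam1
    hlam2 g hgsym hg hgnd U hUmem hU
end

section
/- For every β ∈ R_Θ⁺ and every X ∈ 𝔪^ℂ one has (∇_{V_β} Ω)(V_β, X) = 0 and (∇_{J V_β} Ω)(J V_β, X) = 0. -/
/-!
Polarising the defining identity of `U` gives the Koszul-type formula
`2 g(b, ∇_a z) = g(π[b,a], z) + g(a, π[b,z]) - g(b, π[a,z])` on `𝔪^ℂ`. With `b = a` it gives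
`g(a, ∇_a z) = 0`, and as `J` is `g`-skew, `(∇_a Ω)(a, z) = g(J a, ∇_a z)`. For `a = V_β` the formula
makes both `g(J a, ∇_a z)` and `g(a, ∇_{J a} z)` vanish, because `π[a, J a]` is a multiple of
`π(H_β) = 0` and `g(J a, π[a, z]) = g(a, π[J a, z])`. Writing `a ∝ X_β - X_{-β}`,
`J a ∝ X_β + X_{-β}`, the last identity reduces to `g(X_{-δ}, π[X_δ, z]) = 0` for `δ = ±β`, which
holds because `π[X_δ, X_γ]` is a multiple of `X_{δ+γ}` and `δ + γ ≠ δ`.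
-/

namespace Submodule

variable {R M N P : Type*} [CommSemiring R] [AddCommMonoid M] [AddCommMonoid N] [AddCommMonoid P]
  [Module R M] [Module R N] [Module R P]

theorem apply_mem_of_mem_span₂ {f : M →ₗ[R] N →ₗ[R] P} {s : Set M} {t : Set N}
    {r : Submodule R P} (h : ∀ m ∈ s, ∀ n ∈ t, f m n ∈ r) {m : M} {n : N}
    (hm : m ∈ span R s) (hn : n ∈ span R t) : f m n ∈ r := by
  refine map₂_le.mp ?_ m hm n hn
  rw [map₂_span_span, span_le]
  rintro _ ⟨m, hm, n, hn, rfl⟩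
  exact h m hm n hn

end Submodule

section Connection

variable {K L : Type*} [Field K] [LieRing L] [LieAlgebra K L]
  {S : Submodule K L} {g : L →ₗ[K] L →ₗ[K] K} {πm J : L →ₗ[K] L} {U : L →ₗ[K] L →ₗ[K] L}
  {nab : L → L → L} {covOm : L → L → L → K}

theorem nabla_mem (hπm : ∀ x ∈ S, ∀ y ∈ S, πm ⁅x, y⁆ ∈ S) (hUmem : ∀ x y : L, U x y ∈ S)
    (hnab : ∀ x y : L, nab x y = -(1/2 : K) • πm ⁅x, y⁆ + U x y)
    {a z : L} (ha : a ∈ S) (hz : z ∈ S) : nab a z ∈ S := by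
  rw [hnab]
  exact S.add_mem (S.smul_mem _ (hπm a ha z hz)) (hUmem a z)

variable [CharZero K]

theorem two_mul_apply_nabla (hgsym : ∀ x y : L, g x y = g y x)
    (hU : ∀ x ∈ S, ∀ y ∈ S, ∀ z ∈ S,
      (2 : K) * g (U x y) z = g (πm ⁅z, x⁆) y + g x (πm ⁅z, y⁆))
    (hnab : ∀ x y : L, nab x y = -(1/2 : K) • πm ⁅x, y⁆ + U x y)
    {a b z : L} (ha : a ∈ S) (hb : b ∈ S) (hz : z ∈ S) :
    2 * g b (nab a z) = g (πm ⁅b, a⁆) z + g a (πm ⁅b, z⁆) - g b (πm ⁅a, z⁆) := by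
  rw [hnab, map_add, map_smul, smul_eq_mul, hgsym b (U a z), mul_add, hU a ha z hz b hb]
  ring

theorem apply_nabla_self (hgsym : ∀ x y : L, g x y = g y x)
    (hU : ∀ x ∈ S, ∀ y ∈ S, ∀ z ∈ S,
      (2 : K) * g (U x y) z = g (πm ⁅z, x⁆) y + g x (πm ⁅z, y⁆))
    (hnab : ∀ x y : L, nab x y = -(1/2 : K) • πm ⁅x, y⁆ + U x y)
    {a z : L} (ha : a ∈ S) (hz : z ∈ S) : g a (nab a z) = 0 := by
  have h := two_mul_apply_nabla hgsym hU hnab ha ha hz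
  rw [lie_self, map_zero, map_zero, LinearMap.zero_apply, zero_add, sub_self] at h
  linear_combination (1/2 : K) * h

theorem covOm_self_eq_apply_J_nabla (hgsym : ∀ x y : L, g x y = g y x)
    (hU : ∀ x ∈ S, ∀ y ∈ S, ∀ z ∈ S,
      (2 : K) * g (U x y) z = g (πm ⁅z, x⁆) y + g x (πm ⁅z, y⁆))
    (hπm : ∀ x ∈ S, ∀ y ∈ S, πm ⁅x, y⁆ ∈ S) (hUmem : ∀ x y : L, U x y ∈ S)
    (hnab : ∀ x y : L, nab x y = -(1/2 : K) • πm ⁅x, y⁆ + U x y)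
    (hJS : ∀ z ∈ S, J z ∈ S) (hJskew : ∀ y ∈ S, ∀ z ∈ S, g (J y) z = - g y (J z))
    (hcovOm : ∀ x y z : L, covOm x y z = g y (nab x (J z) - J (nab x z)))
    {a z : L} (ha : a ∈ S) (hz : z ∈ S) : covOm a a z = g (J a) (nab a z) := by
  rw [hcovOm, map_sub, apply_nabla_self hgsym hU hnab ha (hJS z hz),
    hJskew a ha _ (nabla_mem hπm hUmem hnab ha hz)]
  ring

theorem covOm_self_eq_zero (hgsym : ∀ x y : L, g x y = g y x)
    (hU : ∀ x ∈ S, ∀ y ∈ S, ∀ z ∈ S,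
      (2 : K) * g (U x y) z = g (πm ⁅z, x⁆) y + g x (πm ⁅z, y⁆))
    (hπm : ∀ x ∈ S, ∀ y ∈ S, πm ⁅x, y⁆ ∈ S) (hUmem : ∀ x y : L, U x y ∈ S)
    (hnab : ∀ x y : L, nab x y = -(1/2 : K) • πm ⁅x, y⁆ + U x y)
    (hJS : ∀ z ∈ S, J z ∈ S) (hJskew : ∀ y ∈ S, ∀ z ∈ S, g (J y) z = - g y (J z))
    (hcovOm : ∀ x y z : L, covOm x y z = g y (nab x (J z) - J (nab x z)))
    {a : L} (ha : a ∈ S) (hJJ : J (J a) = -a) (hlie : πm ⁅a, J a⁆ = 0)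
    (hpair : ∀ z ∈ S, g (J a) (πm ⁅a, z⁆) = g a (πm ⁅J a, z⁆))
    {z : L} (hz : z ∈ S) : covOm a a z = 0 ∧ covOm (J a) (J a) z = 0 := by
  have hJa := hJS a ha
  constructor
  · have h := two_mul_apply_nabla hgsym hU hnab ha hJa hz
    rw [← lie_skew, map_neg, hlie, neg_zero, map_zero, LinearMap.zero_apply, zero_add,
      hpair z hz, sub_self] at h
    rw [covOm_self_eq_apply_J_nabla hgsym hU hπm hUmem hnab hJS hJskew hcovOm ha hz]
    linear_combination (1/2 : K) * h
  · have h := two_mul_apply_nabla hgsym hU hnab hJa ha hz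
    rw [hlie, map_zero, LinearMap.zero_apply, zero_add, hpair z hz, sub_self] at h
    rw [covOm_self_eq_apply_J_nabla hgsym hU hπm hUmem hnab hJS hJskew hcovOm hJa hz, hJJ, map_neg,
      LinearMap.neg_apply]
    linear_combination (-1/2 : K) * h

end Connection

section WeylBasis

open Complex

variable {L V : Type*} [LieRing L] [LieAlgebra ℂ L]
  {R RΘ RΘc : Finset V} {X H : V → L} {πm J : L →ₗ[ℂ] L} {g : L →ₗ[ℂ] L →ₗ[ℂ] ℂ} {eps : V → ℝ}

theorem J_mem_span (hJ : ∀ α ∈ RΘc, J (X α) = (I * (eps α : ℂ)) • X α) {z : L}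
    (hz : z ∈ Submodule.span ℂ (X '' (RΘc : Set V))) :
    J z ∈ Submodule.span ℂ (X '' (RΘc : Set V)) := by
  refine (Submodule.span_le (p := (Submodule.span ℂ (X '' (RΘc : Set V))).comap J)).mpr ?_ hz
  rintro _ ⟨α, hα, rfl⟩
  rw [SetLike.mem_coe, Submodule.mem_comap, hJ α hα]
  exact Submodule.smul_mem _ _ (Submodule.subset_span (Set.mem_image_of_mem X hα))

variable [AddCommGroup V]

theorem neg_mem_compl (Θ : Finset V) (hRneg : ∀ α ∈ R, -α ∈ R)
    (hRΘ : ∀ α, α ∈ RΘ ↔ α ∈ R ∧ α ∈ AddSubgroup.closure (Θ : Set V))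
    (hRΘc : ∀ α, α ∈ RΘc ↔ α ∈ R ∧ α ∉ RΘ) {α : V} (hα : α ∈ RΘc) : -α ∈ RΘc := by
  obtain ⟨hαR, hαΘ⟩ := (hRΘc α).1 hα
  refine (hRΘc _).2 ⟨hRneg α hαR, fun hmem => hαΘ ((hRΘ α).2 ⟨hαR, ?_⟩)⟩
  simpa using neg_mem ((hRΘ _).1 hmem).2

theorem proj_lie_X_eq_zero_or (hRΘc : ∀ α, α ∈ RΘc ↔ α ∈ R ∧ α ∉ RΘ)
    (hbH : ∀ α ∈ R, ⁅X α, X (-α)⁆ = H α)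
    (hbR : ∀ α ∈ R, ∀ β ∈ R, α + β ∈ R → ∃ c : ℂ, ⁅X α, X β⁆ = c • X (α + β))
    (hb0 : ∀ α ∈ R, ∀ β ∈ R, α + β ∉ R → α + β ≠ 0 → ⁅X α, X β⁆ = (0 : L))
    (hπm1 : ∀ α ∈ RΘc, πm (X α) = X α) (hπm2 : ∀ α ∈ RΘ, πm (X α) = 0)
    (hπm3 : ∀ α ∈ R, πm (H α) = 0) {δ γ : V} (hδ : δ ∈ RΘc) (hγ : γ ∈ RΘc) :
    πm ⁅X δ, X γ⁆ = 0 ∨ δ + γ ∈ RΘc ∧ ∃ c : ℂ, πm ⁅X δ, X γ⁆ = c • X (δ + γ) := by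
  have hδR := ((hRΘc δ).1 hδ).1
  have hγR := ((hRΘc γ).1 hγ).1
  by_cases hsum0 : δ + γ = 0
  · left
    rw [eq_neg_of_add_eq_zero_right hsum0, hbH δ hδR, hπm3 δ hδR]
  by_cases hsumR : δ + γ ∈ R
  · obtain ⟨c, hc⟩ := hbR δ hδR γ hγR hsumR
    rw [hc, map_smul]
    by_cases hsumΘ : δ + γ ∈ RΘ
    · left
      rw [hπm2 _ hsumΘ, smul_zero]
    · have hsum := (hRΘc _).2 ⟨hsumR, hsumΘ⟩
      exact Or.inr ⟨hsum, c, by rw [hπm1 _ hsum]⟩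
  · left
    rw [hb0 δ hδR γ hγR hsumR hsum0, map_zero]

theorem proj_lie_mem_span
    (hproj : ∀ δ ∈ RΘc, ∀ γ ∈ RΘc,
      πm ⁅X δ, X γ⁆ = 0 ∨ δ + γ ∈ RΘc ∧ ∃ c : ℂ, πm ⁅X δ, X γ⁆ = c • X (δ + γ))
    {a z : L} (ha : a ∈ Submodule.span ℂ (X '' (RΘc : Set V)))
    (hz : z ∈ Submodule.span ℂ (X '' (RΘc : Set V))) :
    πm ⁅a, z⁆ ∈ Submodule.span ℂ (X '' (RΘc : Set V)) := by
  refine Submodule.apply_mem_of_mem_span₂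
    (f := (LieModule.toEnd ℂ L L : L →ₗ[ℂ] Module.End ℂ L).compr₂ πm) ?_ ha hz
  rintro _ ⟨δ, hδ, rfl⟩ _ ⟨γ, hγ, rfl⟩
  rcases hproj δ hδ γ hγ with h | ⟨hsum, c, h⟩
  · simp [h]
  · simpa [h] using Submodule.smul_mem _ c (Submodule.subset_span (Set.mem_image_of_mem X hsum))

theorem apply_X_neg_proj_lie_eq_zero [DecidableEq V] {lam : V → ℝ} (h0 : (0 : V) ∉ RΘc)
    (hRΘcneg : ∀ α ∈ RΘc, -α ∈ RΘc)
    (hg : ∀ α ∈ RΘc, ∀ β ∈ RΘc, g (X α) (X β) = if β = -α then (lam α : ℂ) else 0)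
    (hproj : ∀ δ ∈ RΘc, ∀ γ ∈ RΘc,
      πm ⁅X δ, X γ⁆ = 0 ∨ δ + γ ∈ RΘc ∧ ∃ c : ℂ, πm ⁅X δ, X γ⁆ = c • X (δ + γ))
    {δ : V} {z : L} (hδ : δ ∈ RΘc) (hz : z ∈ Submodule.span ℂ (X '' (RΘc : Set V))) :
    g (X (-δ)) (πm ⁅X δ, z⁆) = 0 := by
  let f : L →ₗ[ℂ] ℂ := g (X (-δ)) ∘ₗ πm ∘ₗ LieModule.toEnd ℂ L L (X δ)
  refine (Submodule.span_le (p := LinearMap.ker f)).mpr ?_ hz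
  rintro _ ⟨γ, hγ, rfl⟩
  change g (X (-δ)) (πm ⁅X δ, X γ⁆) = 0
  have hγ0 : γ ≠ 0 := fun h => h0 (h ▸ hγ)
  rcases hproj δ hδ γ hγ with h | ⟨hsum, c, h⟩
  · simp [h]
  · simp [h, hg _ (hRΘcneg δ hδ) _ hsum, hγ0]

theorem apply_J_left_eq_neg [DecidableEq V] {lam : V → ℝ}
    (hg : ∀ α ∈ RΘc, ∀ β ∈ RΘc, g (X α) (X β) = if β = -α then (lam α : ℂ) else 0)
    (heps2 : ∀ α : V, eps (-α) = - eps α)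
    (hJ : ∀ α ∈ RΘc, J (X α) = (I * (eps α : ℂ)) • X α) {y z : L}
    (hy : y ∈ Submodule.span ℂ (X '' (RΘc : Set V)))
    (hz : z ∈ Submodule.span ℂ (X '' (RΘc : Set V))) :
    g (J y) z = - g y (J z) := by
  have h := Submodule.apply_mem_of_mem_span₂ (f := g ∘ₗ J + g.compl₂ J) (r := ⊥) ?_ hy hz
  · simpa [add_eq_zero_iff_eq_neg] using h
  rintro _ ⟨α, hα, rfl⟩ _ ⟨γ, hγ, rfl⟩
  simp only [LinearMap.add_apply, LinearMap.comp_apply, LinearMap.compl₂_apply, hJ α hα,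
    hJ γ hγ, map_smul, LinearMap.smul_apply, smul_eq_mul, hg α hα γ hγ, Submodule.mem_bot]
  split_ifs with hαγ
  · rw [hαγ, heps2]
    push_cast
    ring
  · ring

theorem J_smul_X_sub (heps2 : ∀ α : V, eps (-α) = - eps α)
    (hJ : ∀ α ∈ RΘc, J (X α) = (I * (eps α : ℂ)) • X α) {β : V} (hβ : β ∈ RΘc)
    (hβneg : -β ∈ RΘc) (c : ℂ) :
    J (c • (X β - X (-β))) = (c * (I * eps β)) • (X β + X (-β)) := by
  rw [map_smul, map_sub, hJ β hβ, hJ _ hβneg, heps2]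
  push_cast
  module

theorem J_J_smul_X_sub (heps1 : ∀ α ∈ RΘc, eps α = 1 ∨ eps α = -1)
    (heps2 : ∀ α : V, eps (-α) = - eps α)
    (hJ : ∀ α ∈ RΘc, J (X α) = (I * (eps α : ℂ)) • X α) {β : V} (hβ : β ∈ RΘc)
    (hβneg : -β ∈ RΘc) (c : ℂ) :
    J (J (c • (X β - X (-β)))) = -(c • (X β - X (-β))) := by
  have hsq : (eps β : ℂ) ^ 2 = 1 := by
    rcases heps1 β hβ with h | h <;> simp [h]
  rw [J_smul_X_sub heps2 hJ hβ hβneg, map_smul, map_add, hJ β hβ, hJ _ hβneg, heps2]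
  push_cast
  linear_combination (norm := module) (c * (eps β : ℂ) ^ 2 * I_sq - c * hsq) • (X β - X (-β))

theorem proj_lie_smul_X_sub_J (hbH : ∀ α ∈ R, ⁅X α, X (-α)⁆ = H α)
    (hπm3 : ∀ α ∈ R, πm (H α) = 0) (heps2 : ∀ α : V, eps (-α) = - eps α)
    (hJ : ∀ α ∈ RΘc, J (X α) = (I * (eps α : ℂ)) • X α) {β : V} (hβR : β ∈ R)
    (hβ : β ∈ RΘc) (hβneg : -β ∈ RΘc) (c : ℂ) :
    πm ⁅c • (X β - X (-β)), J (c • (X β - X (-β)))⁆ = 0 := by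
  rw [J_smul_X_sub heps2 hJ hβ hβneg, smul_lie, lie_smul, sub_lie, lie_add, lie_add, lie_self,
    lie_self, ← lie_skew (X (-β)), hbH β hβR]
  simp [hπm3 β hβR]

theorem apply_J_proj_lie_smul_X_sub [DecidableEq V] {lam : V → ℝ} (h0 : (0 : V) ∉ RΘc)
    (hRΘcneg : ∀ α ∈ RΘc, -α ∈ RΘc)
    (hg : ∀ α ∈ RΘc, ∀ β ∈ RΘc, g (X α) (X β) = if β = -α then (lam α : ℂ) else 0)
    (hproj : ∀ δ ∈ RΘc, ∀ γ ∈ RΘc,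
      πm ⁅X δ, X γ⁆ = 0 ∨ δ + γ ∈ RΘc ∧ ∃ c : ℂ, πm ⁅X δ, X γ⁆ = c • X (δ + γ))
    (heps2 : ∀ α : V, eps (-α) = - eps α)
    (hJ : ∀ α ∈ RΘc, J (X α) = (I * (eps α : ℂ)) • X α) {β : V} (hβ : β ∈ RΘc) (c : ℂ)
    {z : L} (hz : z ∈ Submodule.span ℂ (X '' (RΘc : Set V))) :
    g (J (c • (X β - X (-β)))) (πm ⁅c • (X β - X (-β)), z⁆) =
      g (c • (X β - X (-β))) (πm ⁅J (c • (X β - X (-β))), z⁆) := by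
  have hβneg := hRΘcneg β hβ
  have hpos := apply_X_neg_proj_lie_eq_zero h0 hRΘcneg hg hproj hβ hz
  have hneg := apply_X_neg_proj_lie_eq_zero h0 hRΘcneg hg hproj hβneg hz
  rw [neg_neg] at hneg
  rw [J_smul_X_sub heps2 hJ hβ hβneg]
  simp only [map_smul, map_add, map_sub, smul_lie, add_lie, sub_lie, LinearMap.smul_apply,
    LinearMap.add_apply, LinearMap.sub_apply, smul_eq_mul]
  linear_combination 2 * c * (c * (I * eps β)) * (hpos - hneg)

end WeylBasis

theorem stmt12_general
    (L : Type*) [LieRing L] [LieAlgebra ℂ L]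
    (V : Type*) [AddCommGroup V] [DecidableEq V]
    (R : Finset V) (hR0 : (0 : V) ∉ R) (hRneg : ∀ α ∈ R, -α ∈ R)
    (Rpos : Finset V)
    (Θ : Finset V)
    (RΘ : Finset V)
    (hRΘ : ∀ α, α ∈ RΘ ↔ α ∈ R ∧ α ∈ AddSubgroup.closure (Θ : Set V))
    (RΘc : Finset V) (hRΘc : ∀ α, α ∈ RΘc ↔ α ∈ R ∧ α ∉ RΘ)
    (X H : V → L) (n : V → V → ℝ)
    (hbH : ∀ α ∈ R, ⁅X α, X (-α)⁆ = H α)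
    (hbR : ∀ α ∈ R, ∀ β ∈ R, α + β ∈ R → ⁅X α, X β⁆ = (n α β : ℂ) • X (α + β))
    (hb0 : ∀ α ∈ R, ∀ β ∈ R, α + β ∉ R → α + β ≠ 0 → ⁅X α, X β⁆ = (0 : L))
    (πm : L →ₗ[ℂ] L)
    (hπm1 : ∀ α ∈ RΘc, πm (X α) = X α)
    (hπm2 : ∀ α ∈ RΘ, πm (X α) = 0)
    (hπm3 : ∀ α ∈ R, πm (H α) = 0)
    (lam : V → ℝ)
    (g : L →ₗ[ℂ] L →ₗ[ℂ] ℂ) (hgsym : ∀ x y : L, g x y = g y x)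
    (hg : ∀ α ∈ RΘc, ∀ β ∈ RΘc, g (X α) (X β) = if β = -α then (lam α : ℂ) else 0)
    (U : L →ₗ[ℂ] L →ₗ[ℂ] L)
    (hUmem : ∀ x y : L, U x y ∈ Submodule.span ℂ (X '' (RΘc : Set V)))
    (hU : ∀ x ∈ Submodule.span ℂ (X '' (RΘc : Set V)),
          ∀ y ∈ Submodule.span ℂ (X '' (RΘc : Set V)),
          ∀ z ∈ Submodule.span ℂ (X '' (RΘc : Set V)),
      (2 : ℂ) * g (U x y) z = g (πm ⁅z, x⁆) y + g x (πm ⁅z, y⁆))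
    (eps : V → ℝ) (heps1 : ∀ α ∈ RΘc, eps α = 1 ∨ eps α = -1)
    (heps2 : ∀ α : V, eps (-α) = - eps α)
    (J : L →ₗ[ℂ] L)
    (hJ : ∀ α ∈ RΘc, J (X α) = (Complex.I * (eps α : ℂ)) • X α)
    (nab : L → L → L)
    (hnab : ∀ x y : L, nab x y = -(1/2 : ℂ) • πm ⁅x, y⁆ + U x y)
    (covOm : L → L → L → ℂ)
    (hcovOm : ∀ x y z : L, covOm x y z = g y (nab x (J z) - J (nab x z)))
    (Rcpos : Finset V) (hRcpos : ∀ α, α ∈ Rcpos ↔ α ∈ RΘc ∧ α ∈ Rpos)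
    (Vv : V → L)
    (hVv : ∀ α : V, Vv α = (((Real.sqrt (2 * lam α))⁻¹ : ℝ) : ℂ) • (X α - X (-α)))
    :
    ∀ β ∈ Rcpos, ∀ x ∈ Submodule.span ℂ (X '' (RΘc : Set V)),
      covOm (Vv β) (Vv β) x = 0 ∧ covOm (J (Vv β)) (J (Vv β)) x = 0 := by
  intro β hβ z hz
  have hβc := ((hRcpos β).1 hβ).1
  have h0 : (0 : V) ∉ RΘc := fun h => hR0 ((hRΘc 0).1 h).1
  have hRΘcneg : ∀ α ∈ RΘc, -α ∈ RΘc := fun α => neg_mem_compl Θ hRneg hRΘ hRΘc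
  have hproj : ∀ δ ∈ RΘc, ∀ γ ∈ RΘc,
      πm ⁅X δ, X γ⁆ = 0 ∨ δ + γ ∈ RΘc ∧ ∃ c : ℂ, πm ⁅X δ, X γ⁆ = c • X (δ + γ) :=
    fun δ hδ γ hγ => proj_lie_X_eq_zero_or hRΘc hbH
      (fun α hα β hβ hsum => ⟨_, hbR α hα β hβ hsum⟩) hb0 hπm1 hπm2 hπm3 hδ hγ
  have hVmem : X β - X (-β) ∈ Submodule.span ℂ (X '' (RΘc : Set V)) :=
    sub_mem (Submodule.subset_span (Set.mem_image_of_mem X hβc))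
      (Submodule.subset_span (Set.mem_image_of_mem X (hRΘcneg β hβc)))
  rw [hVv β]
  exact covOm_self_eq_zero hgsym hU (fun a ha z hz => proj_lie_mem_span hproj ha hz) hUmem hnab
    (fun z hz => J_mem_span hJ hz) (fun y hy z hz => apply_J_left_eq_neg hg heps2 hJ hy hz) hcovOm
    (Submodule.smul_mem _ _ hVmem) (J_J_smul_X_sub heps1 heps2 hJ hβc (hRΘcneg β hβc) _)
    (proj_lie_smul_X_sub_J hbH hπm3 heps2 hJ ((hRΘc β).1 hβc).1 hβc (hRΘcneg β hβc) _)
    (fun z hz => apply_J_proj_lie_smul_X_sub h0 hRΘcneg hg hproj heps2 hJ hβc _ hz) hz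

theorem stmt12
    (L : Type*) [LieRing L] [LieAlgebra ℂ L]
    (V : Type*) [AddCommGroup V] [DecidableEq V]
    (R : Finset V) (hR0 : (0 : V) ∉ R) (hRneg : ∀ α ∈ R, -α ∈ R)
    (Rpos : Finset V) (hposR : Rpos ⊆ R)
    (hposneg : ∀ α ∈ R, α ∈ Rpos ↔ -α ∉ Rpos)
    (Sig : Finset V) (hSigpos : Sig ⊆ Rpos)
    (Θ : Finset V) (hΘSig : Θ ⊆ Sig)
    (RΘ : Finset V)
    (hRΘ : ∀ α, α ∈ RΘ ↔ α ∈ R ∧ α ∈ AddSubgroup.closure (Θ : Set V))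
    (RΘc : Finset V) (hRΘc : ∀ α, α ∈ RΘc ↔ α ∈ R ∧ α ∉ RΘ)
    (X H : V → L) (n : V → V → ℝ)
    (hbH : ∀ α ∈ R, ⁅X α, X (-α)⁆ = H α)
    (hbR : ∀ α ∈ R, ∀ β ∈ R, α + β ∈ R → ⁅X α, X β⁆ = (n α β : ℂ) • X (α + β))
    (hb0 : ∀ α ∈ R, ∀ β ∈ R, α + β ∉ R → α + β ≠ 0 → ⁅X α, X β⁆ = (0 : L))
    (hn1 : ∀ α β : V, n α β = - n β α)
    (hn2 : ∀ α β : V, n α β = - n (-α) (-β))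
    (hn3 : ∀ α β γ : V, α + β + γ = 0 → n α β = n β γ ∧ n β γ = n γ α)
    (πm : L →ₗ[ℂ] L)
    (hπm1 : ∀ α ∈ RΘc, πm (X α) = X α)
    (hπm2 : ∀ α ∈ RΘ, πm (X α) = 0)
    (hπm3 : ∀ α ∈ R, πm (H α) = 0)
    (lam : V → ℝ) (hlam1 : ∀ α ∈ RΘc, 0 < lam α) (hlam2 : ∀ α : V, lam (-α) = lam α)
    (g : L →ₗ[ℂ] L →ₗ[ℂ] ℂ) (hgsym : ∀ x y : L, g x y = g y x)
    (hg : ∀ α ∈ RΘc, ∀ β ∈ RΘc, g (X α) (X β) = if β = -α then (lam α : ℂ) else 0)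
    (hgnd : ∀ x ∈ Submodule.span ℂ (X '' (RΘc : Set V)),
      (∀ z ∈ Submodule.span ℂ (X '' (RΘc : Set V)), g x z = 0) → x = 0)
    (U : L →ₗ[ℂ] L →ₗ[ℂ] L) (hUsym : ∀ x y : L, U x y = U y x)
    (hUmem : ∀ x y : L, U x y ∈ Submodule.span ℂ (X '' (RΘc : Set V)))
    (hU : ∀ x ∈ Submodule.span ℂ (X '' (RΘc : Set V)),
          ∀ y ∈ Submodule.span ℂ (X '' (RΘc : Set V)),
          ∀ z ∈ Submodule.span ℂ (X '' (RΘc : Set V)),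
      (2 : ℂ) * g (U x y) z = g (πm ⁅z, x⁆) y + g x (πm ⁅z, y⁆))
    (eps : V → ℝ) (heps1 : ∀ α ∈ RΘc, eps α = 1 ∨ eps α = -1)
    (heps2 : ∀ α : V, eps (-α) = - eps α)
    (J : L →ₗ[ℂ] L)
    (hJ : ∀ α ∈ RΘc, J (X α) = (Complex.I * (eps α : ℂ)) • X α)
    (nab : L → L → L)
    (hnab : ∀ x y : L, nab x y = -(1/2 : ℂ) • πm ⁅x, y⁆ + U x y)
    (covOm : L → L → L → ℂ)
    (hcovOm : ∀ x y z : L, covOm x y z = g y (nab x (J z) - J (nab x z)))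
    (Rcpos : Finset V) (hRcpos : ∀ α, α ∈ Rcpos ↔ α ∈ RΘc ∧ α ∈ Rpos)
    (Vv : V → L)
    (hVv : ∀ α : V, Vv α = (((Real.sqrt (2 * lam α))⁻¹ : ℝ) : ℂ) • (X α - X (-α)))
    :
    ∀ β ∈ Rcpos, ∀ x ∈ Submodule.span ℂ (X '' (RΘc : Set V)),
      covOm (Vv β) (Vv β) x = 0 ∧ covOm (J (Vv β)) (J (Vv β)) x = 0 :=
  stmt12_general L V R hR0 hRneg Rpos Θ RΘ hRΘ RΘc hRΘc X H n hbH hbR hb0 πm hπm1 hπm2 hπm3 lam g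
    hgsym hg U hUmem hU eps heps1 heps2 J hJ nab hnab covOm hcovOm Rcpos hRcpos Vv hVv
end

section
/- For all X, Y ∈ 𝔫^ℂ one has U(X, Y) ∈ 𝔫^ℂ and U(X, Y) = U'(X, Y); i.e., the restriction of U to 𝔫^ℂ × 𝔫^ℂ coincides with U'. -/
/-!
Both `U(X, Y)` and `U'(X, Y)` lie in `𝔪^ℂ`, on which `g` is nondegenerate, so it suffices to
compare `g(U(X, Y), X_δ)` and `g(U'(X, Y), X_δ)` for `δ ∈ R_Θ`. Since `[X_γ, X_α]` is a multiple of
`X_{γ+α}` (or lies in `𝔥`), a bracket of two elements of `𝔫^ℂ` only involves roots in `⟨Θ'⟩`, where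
`π_𝔪` and `π_𝔫` agree; so for `δ ∈ ⟨Θ'⟩` the two defining identities coincide. For `δ ∉ ⟨Θ'⟩` both
sides vanish: `X_δ` is `g`-orthogonal to `𝔫^ℂ`, and `[X_δ, 𝔫^ℂ]` only involves roots `δ + α` whose
negatives are not in `⟨Θ'⟩`.
-/

open Submodule

theorem LinearMap.apply_eq_zero_of_mem_span₂ {R M N P : Type*} [CommSemiring R]
    [AddCommMonoid M] [AddCommMonoid N] [AddCommMonoid P] [Module R M] [Module R N] [Module R P]
    (f : M →ₗ[R] N →ₗ[R] P) {s : Set M} {t : Set N} (h : ∀ a ∈ s, ∀ b ∈ t, f a b = 0)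
    {x : M} {y : N} (hx : x ∈ span R s) (hy : y ∈ span R t) : f x y = 0 := by
  have hbot : map₂ f (span R s) (span R t) = ⊥ := by
    rw [map₂_span_span, span_eq_bot]
    rintro _ ⟨a, ha, b, hb, rfl⟩
    exact h a ha b hb
  simpa [hbot] using apply_mem_map₂ f hx hy

theorem LinearMap.apply_eq_zero_of_mem_span_of_notMem {K M V : Type*} [CommRing K]
    [AddCommGroup M] [Module K M] [AddCommGroup V] {X : V → M} {g : M →ₗ[K] M →ₗ[K] K}
    {SM SN : Set V} {B : AddSubgroup V}
    (hgX : ∀ α ∈ SM, ∀ β ∈ SM, β ≠ -α → g (X α) (X β) = 0) (hNM : SN ⊆ SM) (hNB : SN ⊆ B)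
    {δ : V} (hδ : δ ∈ SM) (hδB : δ ∉ B) {w : M} (hw : w ∈ span K (X '' SN)) : g w (X δ) = 0 := by
  refine LinearMap.eqOn_span (f := g.flip (X δ)) (g := 0) ?_ hw
  rintro _ ⟨γ, hγ, rfl⟩
  exact hgX γ (hNM hγ) δ hδ fun h => hδB (h ▸ neg_mem (hNB hγ))

section RootVectors

variable {L V : Type*} [LieRing L] [LieAlgebra ℂ L] [AddCommGroup V]

structure IsWeylBracket (R : Set V) (X H : V → L) (n : V → V → ℝ) : Prop where
  lie_neg : ∀ α ∈ R, ⁅X α, X (-α)⁆ = H α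
  lie_of_add_mem : ∀ α ∈ R, ∀ β ∈ R, α + β ∈ R → ⁅X α, X β⁆ = (n α β : ℂ) • X (α + β)
  lie_of_add_notMem : ∀ α ∈ R, ∀ β ∈ R, α + β ∉ R → α + β ≠ 0 → ⁅X α, X β⁆ = 0

variable {R : Set V} {X H : V → L} {n : V → V → ℝ}

theorem IsWeylBracket.map_lie_eq_zero (hW : IsWeylBracket R X H n) {M : Type*} [AddCommGroup M]
    [Module ℂ M] (φ : L →ₗ[ℂ] M) (hφH : ∀ α ∈ R, φ (H α) = 0) {α β : V} (hα : α ∈ R)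
    (hβ : β ∈ R) (hφX : α + β ∈ R → φ (X (α + β)) = 0) : φ ⁅X α, X β⁆ = 0 := by
  by_cases hzero : α + β = 0
  · rw [eq_neg_of_add_eq_zero_right hzero, hW.lie_neg α hα, hφH α hα]
  by_cases hroot : α + β ∈ R
  · rw [hW.lie_of_add_mem α hα β hβ hroot, map_smul, hφX hroot, smul_zero]
  · rw [hW.lie_of_add_notMem α hα β hβ hroot hzero, map_zero]

variable {A B : AddSubgroup V} {SM SN : Set V}

theorem IsWeylBracket.map_lie_eq_map_lie_of_mem_span (hW : IsWeylBracket R X H n)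
    (hSM : ∀ α, α ∈ SM ↔ α ∈ R ∧ α ∉ A) (hSN : ∀ γ, γ ∈ SN ↔ γ ∈ R ∧ γ ∈ B ∧ γ ∉ A)
    {πm πn : L →ₗ[ℂ] L}
    (hπmX : ∀ α ∈ SM, πm (X α) = X α) (hπm0 : ∀ α ∈ R, α ∈ A → πm (X α) = 0)
    (hπmH : ∀ α ∈ R, πm (H α) = 0) (hπnX : ∀ γ ∈ SN, πn (X γ) = X γ)
    (hπn0 : ∀ γ ∈ R, γ ∉ SN → πn (X γ) = 0) (hπnH : ∀ α ∈ R, πn (H α) = 0) {z x : L}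
    (hz : z ∈ span ℂ (X '' SN)) (hx : x ∈ span ℂ (X '' SN)) : πm ⁅z, x⁆ = πn ⁅z, x⁆ := by
  rw [← sub_eq_zero, ← LinearMap.sub_apply]
  refine ((LieAlgebra.ad ℂ L : L →ₗ[ℂ] Module.End ℂ L).compr₂ (πm - πn)).apply_eq_zero_of_mem_span₂
    ?_ hz hx
  rintro _ ⟨γ, hγ, rfl⟩ _ ⟨α, hα, rfl⟩
  obtain ⟨hγR, hγB, -⟩ := (hSN γ).1 hγ
  obtain ⟨hαR, hαB, -⟩ := (hSN α).1 hα
  change (πm - πn) ⁅X γ, X α⁆ = 0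
  refine hW.map_lie_eq_zero _ (fun β hβ => by simp [hπmH β hβ, hπnH β hβ]) hγR hαR fun hroot => ?_
  by_cases hA : γ + α ∈ A
  · have hnotN : γ + α ∉ SN := fun h => ((hSN _).1 h).2.2 hA
    simp [hπm0 _ hroot hA, hπn0 _ hroot hnotN]
  · have hN : γ + α ∈ SN := (hSN _).2 ⟨hroot, add_mem hγB hαB, hA⟩
    simp [hπmX _ ((hSM _).2 ⟨hroot, hA⟩), hπnX _ hN]

theorem IsWeylBracket.apply_lie_apply_eq_zero_of_mem_span (hW : IsWeylBracket R X H n)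
    (hSM : ∀ α, α ∈ SM ↔ α ∈ R ∧ α ∉ A) (hSN : ∀ γ, γ ∈ SN ↔ γ ∈ R ∧ γ ∈ B ∧ γ ∉ A)
    {πm : L →ₗ[ℂ] L} (hπmX : ∀ α ∈ SM, πm (X α) = X α) (hπm0 : ∀ α ∈ R, α ∈ A → πm (X α) = 0)
    (hπmH : ∀ α ∈ R, πm (H α) = 0) {g : L →ₗ[ℂ] L →ₗ[ℂ] ℂ}
    (hgX : ∀ α ∈ SM, ∀ β ∈ SM, β ≠ -α → g (X α) (X β) = 0) {δ : V} (hδ : δ ∈ R) (hδB : δ ∉ B)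
    {x y : L} (hx : x ∈ span ℂ (X '' SN)) (hy : y ∈ span ℂ (X '' SN)) :
    g (πm ⁅X δ, x⁆) y = 0 := by
  refine (g.comp (πm ∘ₗ LieAlgebra.ad ℂ L (X δ))).apply_eq_zero_of_mem_span₂ ?_ hx hy
  rintro _ ⟨α, hα, rfl⟩ _ ⟨β, hβ, rfl⟩
  obtain ⟨hαR, hαB, -⟩ := (hSN α).1 hα
  obtain ⟨hβR, hβB, hβA⟩ := (hSN β).1 hβ
  change (g.flip (X β) ∘ₗ πm) ⁅X δ, X α⁆ = 0
  refine hW.map_lie_eq_zero _ (fun γ hγ => by simp [hπmH γ hγ]) hδ hαR fun hroot => ?_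
  by_cases hA : δ + α ∈ A
  · simp [hπm0 _ hroot hA]
  have hδαM : δ + α ∈ SM := (hSM _).2 ⟨hroot, hA⟩
  rw [LinearMap.comp_apply, hπmX _ hδαM, LinearMap.flip_apply]
  refine hgX _ hδαM β ((hSM β).2 ⟨hβR, hβA⟩) fun h => hδB ?_
  have hδ_eq : δ = -β - α := by rw [h]; abel
  exact hδ_eq ▸ sub_mem (neg_mem hβB) hαB

end RootVectors

theorem stmt14_general
    (L : Type*) [LieRing L] [LieAlgebra ℂ L]
    (V : Type*) [AddCommGroup V] [DecidableEq V]
    (R : Finset V)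
    (Θ : Finset V)
    (RΘ : Finset V)
    (hRΘ : ∀ α, α ∈ RΘ ↔ α ∈ R ∧ α ∈ AddSubgroup.closure (Θ : Set V))
    (RΘc : Finset V) (hRΘc : ∀ α, α ∈ RΘc ↔ α ∈ R ∧ α ∉ RΘ)
    (X H : V → L) (n : V → V → ℝ)
    (hbH : ∀ α ∈ R, ⁅X α, X (-α)⁆ = H α)
    (hbR : ∀ α ∈ R, ∀ β ∈ R, α + β ∈ R → ⁅X α, X β⁆ = (n α β : ℂ) • X (α + β))
    (hb0 : ∀ α ∈ R, ∀ β ∈ R, α + β ∉ R → α + β ≠ 0 → ⁅X α, X β⁆ = (0 : L))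
    (πm : L →ₗ[ℂ] L)
    (hπm1 : ∀ α ∈ RΘc, πm (X α) = X α)
    (hπm2 : ∀ α ∈ RΘ, πm (X α) = 0)
    (hπm3 : ∀ α ∈ R, πm (H α) = 0)
    (lam : V → ℝ)
    (g : L →ₗ[ℂ] L →ₗ[ℂ] ℂ) (hgsym : ∀ x y : L, g x y = g y x)
    (hg : ∀ α ∈ RΘc, ∀ β ∈ RΘc, g (X α) (X β) = if β = -α then (lam α : ℂ) else 0)
    (hgnd : ∀ x ∈ Submodule.span ℂ (X '' (RΘc : Set V)),
      (∀ z ∈ Submodule.span ℂ (X '' (RΘc : Set V)), g x z = 0) → x = 0)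
    (U : L →ₗ[ℂ] L →ₗ[ℂ] L)
    (hUmem : ∀ x y : L, U x y ∈ Submodule.span ℂ (X '' (RΘc : Set V)))
    (hU : ∀ x ∈ Submodule.span ℂ (X '' (RΘc : Set V)),
          ∀ y ∈ Submodule.span ℂ (X '' (RΘc : Set V)),
          ∀ z ∈ Submodule.span ℂ (X '' (RΘc : Set V)),
      (2 : ℂ) * g (U x y) z = g (πm ⁅z, x⁆) y + g x (πm ⁅z, y⁆))
    (Θ' : Finset V)
    (R' : Finset V)
    (hR' : ∀ α, α ∈ R' ↔ α ∈ R ∧ α ∈ AddSubgroup.closure (Θ' : Set V))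
    (R'c : Finset V) (hR'c : ∀ γ, γ ∈ R'c ↔ γ ∈ R' ∧ γ ∉ RΘ)
    (πn : L →ₗ[ℂ] L)
    (hπn1 : ∀ γ ∈ R'c, πn (X γ) = X γ)
    (hπn2 : ∀ γ ∈ R, γ ∉ R'c → πn (X γ) = 0)
    (hπn3 : ∀ α ∈ R, πn (H α) = 0)
    (U' : L →ₗ[ℂ] L →ₗ[ℂ] L)
    (hU'mem : ∀ x y : L, U' x y ∈ Submodule.span ℂ (X '' (R'c : Set V)))
    (hU' : ∀ x ∈ Submodule.span ℂ (X '' (R'c : Set V)),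
           ∀ y ∈ Submodule.span ℂ (X '' (R'c : Set V)),
           ∀ z ∈ Submodule.span ℂ (X '' (R'c : Set V)),
      (2 : ℂ) * g (U' x y) z = g (πn ⁅z, x⁆) y + g x (πn ⁅z, y⁆))
    :
    ∀ x ∈ Submodule.span ℂ (X '' (R'c : Set V)),
      ∀ y ∈ Submodule.span ℂ (X '' (R'c : Set V)),
        U x y ∈ Submodule.span ℂ (X '' (R'c : Set V)) ∧ U x y = U' x y := by
  intro x hx y hy
  set A := AddSubgroup.closure (Θ : Set V)
  set B := AddSubgroup.closure (Θ' : Set V)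
  have hW : IsWeylBracket (R : Set V) X H n := ⟨hbH, hbR, hb0⟩
  have hM : ∀ α, α ∈ RΘc ↔ α ∈ R ∧ α ∉ A := fun α => by rw [hRΘc, hRΘ]; tauto
  have hN : ∀ γ, γ ∈ R'c ↔ γ ∈ R ∧ γ ∈ B ∧ γ ∉ A := fun γ => by rw [hR'c, hR', hRΘ]; tauto
  have hNM : (R'c : Set V) ⊆ RΘc := fun γ hγ => (hM γ).2 ⟨((hN γ).1 hγ).1, ((hN γ).1 hγ).2.2⟩
  have hspan : span ℂ (X '' R'c) ≤ span ℂ (X '' RΘc) := span_mono (Set.image_mono hNM)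
  have hπm0 : ∀ α ∈ R, α ∈ A → πm (X α) = 0 := fun α hα hA => hπm2 α ((hRΘ α).2 ⟨hα, hA⟩)
  have hgX : ∀ α ∈ RΘc, ∀ β ∈ RΘc, β ≠ -α → g (X α) (X β) = 0 := fun α hα β hβ h => by
    rw [hg α hα β hβ, if_neg h]
  have hUU' : U x y = U' x y := by
    refine sub_eq_zero.1 (hgnd _ (sub_mem (hUmem x y) (hspan (hU'mem x y))) fun z hz => ?_)
    refine LinearMap.eqOn_span (f := g (U x y - U' x y)) (g := 0) ?_ hz
    rintro _ ⟨δ, hδ, rfl⟩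
    obtain ⟨hδR, hδA⟩ := (hM δ).1 hδ
    rw [LinearMap.zero_apply, map_sub, LinearMap.sub_apply, sub_eq_zero]
    refine mul_left_cancel₀ (two_ne_zero' ℂ) ?_
    rw [hU x (hspan hx) y (hspan hy) _ (subset_span ⟨δ, hδ, rfl⟩)]
    by_cases hδB : δ ∈ B
    · have hδN : X δ ∈ span ℂ (X '' R'c) := subset_span ⟨δ, (hN δ).2 ⟨hδR, hδB, hδA⟩, rfl⟩
      rw [hU' x hx y hy _ hδN,
        hW.map_lie_eq_map_lie_of_mem_span hM hN hπm1 hπm0 hπm3 hπn1 hπn2 hπn3 hδN hx,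
        hW.map_lie_eq_map_lie_of_mem_span hM hN hπm1 hπm0 hπm3 hπn1 hπn2 hπn3 hδN hy]
    · rw [hgsym x, hW.apply_lie_apply_eq_zero_of_mem_span hM hN hπm1 hπm0 hπm3 hgX hδR hδB hx hy,
        hW.apply_lie_apply_eq_zero_of_mem_span hM hN hπm1 hπm0 hπm3 hgX hδR hδB hy hx,
        LinearMap.apply_eq_zero_of_mem_span_of_notMem hgX hNM (fun γ hγ => ((hN γ).1 hγ).2.1) hδ
          hδB (hU'mem x y), mul_zero, add_zero]
  exact ⟨hUU' ▸ hU'mem x y, hUU'⟩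

theorem stmt14
    (L : Type*) [LieRing L] [LieAlgebra ℂ L]
    (V : Type*) [AddCommGroup V] [DecidableEq V]
    (R : Finset V) (hR0 : (0 : V) ∉ R) (hRneg : ∀ α ∈ R, -α ∈ R)
    (Rpos : Finset V) (hposR : Rpos ⊆ R)
    (hposneg : ∀ α ∈ R, α ∈ Rpos ↔ -α ∉ Rpos)
    (Sig : Finset V) (hSigpos : Sig ⊆ Rpos)
    (Θ : Finset V) (hΘSig : Θ ⊆ Sig)
    (RΘ : Finset V)
    (hRΘ : ∀ α, α ∈ RΘ ↔ α ∈ R ∧ α ∈ AddSubgroup.closure (Θ : Set V))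
    (RΘc : Finset V) (hRΘc : ∀ α, α ∈ RΘc ↔ α ∈ R ∧ α ∉ RΘ)
    (X H : V → L) (n : V → V → ℝ)
    (hbH : ∀ α ∈ R, ⁅X α, X (-α)⁆ = H α)
    (hbR : ∀ α ∈ R, ∀ β ∈ R, α + β ∈ R → ⁅X α, X β⁆ = (n α β : ℂ) • X (α + β))
    (hb0 : ∀ α ∈ R, ∀ β ∈ R, α + β ∉ R → α + β ≠ 0 → ⁅X α, X β⁆ = (0 : L))
    (hn1 : ∀ α β : V, n α β = - n β α)
    (hn2 : ∀ α β : V, n α β = - n (-α) (-β))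
    (hn3 : ∀ α β γ : V, α + β + γ = 0 → n α β = n β γ ∧ n β γ = n γ α)
    (πm : L →ₗ[ℂ] L)
    (hπm1 : ∀ α ∈ RΘc, πm (X α) = X α)
    (hπm2 : ∀ α ∈ RΘ, πm (X α) = 0)
    (hπm3 : ∀ α ∈ R, πm (H α) = 0)
    (lam : V → ℝ) (hlam1 : ∀ α ∈ RΘc, 0 < lam α) (hlam2 : ∀ α : V, lam (-α) = lam α)
    (g : L →ₗ[ℂ] L →ₗ[ℂ] ℂ) (hgsym : ∀ x y : L, g x y = g y x)
    (hg : ∀ α ∈ RΘc, ∀ β ∈ RΘc, g (X α) (X β) = if β = -α then (lam α : ℂ) else 0)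
    (hgnd : ∀ x ∈ Submodule.span ℂ (X '' (RΘc : Set V)),
      (∀ z ∈ Submodule.span ℂ (X '' (RΘc : Set V)), g x z = 0) → x = 0)
    (U : L →ₗ[ℂ] L →ₗ[ℂ] L) (hUsym : ∀ x y : L, U x y = U y x)
    (hUmem : ∀ x y : L, U x y ∈ Submodule.span ℂ (X '' (RΘc : Set V)))
    (hU : ∀ x ∈ Submodule.span ℂ (X '' (RΘc : Set V)),
          ∀ y ∈ Submodule.span ℂ (X '' (RΘc : Set V)),
          ∀ z ∈ Submodule.span ℂ (X '' (RΘc : Set V)),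
      (2 : ℂ) * g (U x y) z = g (πm ⁅z, x⁆) y + g x (πm ⁅z, y⁆))
    (Θ' : Finset V) (hΘ'Sig : Θ' ⊆ Sig) (hΘ'Θ : ¬ Θ' ⊆ Θ)
    (R' : Finset V)
    (hR' : ∀ α, α ∈ R' ↔ α ∈ R ∧ α ∈ AddSubgroup.closure (Θ' : Set V))
    (R'c : Finset V) (hR'c : ∀ γ, γ ∈ R'c ↔ γ ∈ R' ∧ γ ∉ RΘ)
    (πn : L →ₗ[ℂ] L)
    (hπn1 : ∀ γ ∈ R'c, πn (X γ) = X γ)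
    (hπn2 : ∀ γ ∈ R, γ ∉ R'c → πn (X γ) = 0)
    (hπn3 : ∀ α ∈ R, πn (H α) = 0)
    (U' : L →ₗ[ℂ] L →ₗ[ℂ] L) (hU'sym : ∀ x y : L, U' x y = U' y x)
    (hU'mem : ∀ x y : L, U' x y ∈ Submodule.span ℂ (X '' (R'c : Set V)))
    (hU' : ∀ x ∈ Submodule.span ℂ (X '' (R'c : Set V)),
           ∀ y ∈ Submodule.span ℂ (X '' (R'c : Set V)),
           ∀ z ∈ Submodule.span ℂ (X '' (R'c : Set V)),
      (2 : ℂ) * g (U' x y) z = g (πn ⁅z, x⁆) y + g x (πn ⁅z, y⁆))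
    (hgnd' : ∀ x ∈ Submodule.span ℂ (X '' (R'c : Set V)),
      (∀ z ∈ Submodule.span ℂ (X '' (R'c : Set V)), g x z = 0) → x = 0)
    :
    ∀ x ∈ Submodule.span ℂ (X '' (R'c : Set V)),
      ∀ y ∈ Submodule.span ℂ (X '' (R'c : Set V)),
        U x y ∈ Submodule.span ℂ (X '' (R'c : Set V)) ∧ U x y = U' x y :=
  stmt14_general L V R Θ RΘ hRΘ RΘc hRΘc X H n hbH hbR hb0 πm hπm1 hπm2 hπm3 lam g hgsym hg hgnd U
    hUmem hU Θ' R' hR' R'c hR'c πn hπn1 hπn2 hπn3 U' hU'mem hU'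
end

section
/- The algebraic second fundamental form of the flag submanifold vanishes: for all X, Y ∈ 𝔫^ℂ, −(1/2) π_𝔪[X, Y] + U(X, Y) = −(1/2) π_𝔫[X, Y] + U'(X, Y). (Hence the holomorphic flag submanifold is totally geodesic with respect to every invariant metric.) -/
/-!
Both `U` and `U'` are pinned down by pairing against root vectors. For `α, γ` in
`R'∖R(Θ)` the bracket `[X_γ, X_α]` lies in `ℂ H_γ + 𝔤_{γ+α}` with `γ + α ∈ ⟨Θ'⟩`, where
`π_𝔪` and `π_𝔫` agree, so the defining identities of `U` and `U'` coincide. For a normal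
direction `γ ∈ R_Θ ∖ R'`, the form `g` pairs only opposite root spaces, and
`γ + α + β ≠ 0` because `γ ∉ ⟨Θ'⟩`; hence `g(U(X_α, X_β), X_γ) = 0 = g(U'(X_α, X_β), X_γ)`.
Nondegeneracy of `g` on `𝔪^ℂ` then gives `U = U'` on `𝔫^ℂ`.
-/

open Submodule

namespace LinearMap

theorem eqOn_span₂ {R M N P : Type*} [CommSemiring R] [AddCommMonoid M] [AddCommMonoid N]
    [AddCommMonoid P] [Module R M] [Module R N] [Module R P] {f f' : M →ₗ[R] N →ₗ[R] P}
    {s : Set M} {t : Set N} (h : ∀ x ∈ s, ∀ y ∈ t, f x y = f' x y) {x : M}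
    (hx : x ∈ span R s) {y : N} (hy : y ∈ span R t) : f x y = f' x y :=
  eqOn_span (f := f.flip y) (g := f'.flip y)
    (fun x hxs => eqOn_span (f := f x) (g := f' x) (h x hxs) hy) hx

theorem eq_of_pairing_eq_on_generators {K M : Type*} [CommRing K] [AddCommGroup M] [Module K M]
    {g : M →ₗ[K] M →ₗ[K] K} {s : Set M}
    (hg : ∀ x ∈ span K s, (∀ z ∈ span K s, g x z = 0) → x = 0) {u u' : M}
    (hu : u ∈ span K s) (hu' : u' ∈ span K s) (h : ∀ z ∈ s, g u z = g u' z) : u = u' :=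
  sub_eq_zero.1 <| hg _ (sub_mem hu hu') fun _ hz => by
    rw [map_sub, sub_apply, eqOn_span (f := g u) (g := g u') h hz, sub_self]

end LinearMap

section RootVectors

variable {L : Type*} [LieRing L] [LieAlgebra ℂ L] {V : Type*} [AddCommGroup V]
  {R : Finset V} {X H : V → L}

theorem map_lie_eq_on_span_rootVectors {M : Type*} [AddCommGroup M] [Module ℂ M]
    (hbH : ∀ α ∈ R, ⁅X α, X (-α)⁆ = H α)
    (hbR : ∀ α ∈ R, ∀ β ∈ R, α + β ∈ R → ∃ c : ℂ, ⁅X α, X β⁆ = c • X (α + β))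
    (hb0 : ∀ α ∈ R, ∀ β ∈ R, α + β ∉ R → α + β ≠ 0 → ⁅X α, X β⁆ = (0 : L))
    {f f' : L →ₗ[ℂ] M} (A : AddSubgroup V) (hH : ∀ α ∈ R, f (H α) = f' (H α))
    (hX : ∀ δ ∈ R, δ ∈ A → f (X δ) = f' (X δ)) {T : Set V} (hTR : T ⊆ R) (hTA : T ⊆ A)
    {x y : L} (hx : x ∈ span ℂ (X '' T)) (hy : y ∈ span ℂ (X '' T)) :
    f ⁅x, y⁆ = f' ⁅x, y⁆ := by
  let lie : L →ₗ[ℂ] L →ₗ[ℂ] L := LieModule.toEnd ℂ L L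
  refine LinearMap.eqOn_span₂ (f := lie.compr₂ f) (f' := lie.compr₂ f') ?_ hx hy
  rintro _ ⟨α, hα, rfl⟩ _ ⟨β, hβ, rfl⟩
  simp only [lie, LinearMap.compr₂_apply, LieHom.coe_toLinearMap, LieModule.toEnd_apply_apply]
  by_cases hβα : β = -α
  · subst hβα
    rw [hbH α (hTR hα)]
    exact hH α (hTR hα)
  by_cases hs : α + β ∈ R
  · obtain ⟨c, hc⟩ := hbR α (hTR hα) β (hTR hβ) hs
    rw [hc, map_smul, map_smul, hX _ hs (add_mem (hTA hα) (hTA hβ))]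
  · rw [hb0 α (hTR hα) β (hTR hβ) hs fun h => hβα (eq_neg_of_add_eq_zero_right h),
      map_zero, map_zero]

theorem pairing_proj_lie_eq_zero_on_span_rootVectors
    (hbH : ∀ α ∈ R, ⁅X α, X (-α)⁆ = H α)
    (hbR : ∀ α ∈ R, ∀ β ∈ R, α + β ∈ R → ∃ c : ℂ, ⁅X α, X β⁆ = c • X (α + β))
    (hb0 : ∀ α ∈ R, ∀ β ∈ R, α + β ∉ R → α + β ≠ 0 → ⁅X α, X β⁆ = (0 : L))
    {S : Set V} {π : L →ₗ[ℂ] L} {g : L →ₗ[ℂ] L →ₗ[ℂ] ℂ}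
    (hπH : ∀ α ∈ R, π (H α) = 0) (hπS : ∀ δ ∈ S, π (X δ) = X δ)
    (hπ0 : ∀ δ ∈ R, δ ∉ S → π (X δ) = 0)
    (hg : ∀ α ∈ S, ∀ β ∈ S, α + β ≠ 0 → g (X α) (X β) = 0)
    {T : Set V} (hTR : T ⊆ R) (hTS : T ⊆ S) {γ : V} (hγ : γ ∈ R)
    (hγT : ∀ α ∈ T, ∀ β ∈ T, γ + α + β ≠ 0) {x y : L} (hx : x ∈ span ℂ (X '' T))
    (hy : y ∈ span ℂ (X '' T)) : g (π ⁅X γ, x⁆) y = 0 := by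
  let ad : L →ₗ[ℂ] L := LieModule.toEnd ℂ L L (X γ)
  refine LinearMap.eqOn_span₂ (f := g.comp (π.comp ad)) (f' := 0) ?_ hx hy
  rintro _ ⟨α, hα, rfl⟩ _ ⟨β, hβ, rfl⟩
  simp only [ad, LinearMap.comp_apply, LieModule.toEnd_apply_apply, LinearMap.zero_apply]
  by_cases hαγ : α = -γ
  · subst hαγ
    rw [hbH γ hγ, hπH γ hγ, map_zero, LinearMap.zero_apply]
  by_cases hs : γ + α ∈ R
  · obtain ⟨c, hc⟩ := hbR γ hγ α (hTR hα) hs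
    rw [hc, map_smul, map_smul, LinearMap.smul_apply]
    by_cases hsS : γ + α ∈ S
    · rw [hπS _ hsS, hg _ hsS β (hTS hβ) (hγT α hα β hβ), smul_zero]
    · rw [hπ0 _ hs hsS, map_zero, LinearMap.zero_apply, smul_zero]
  · rw [hb0 γ hγ α (hTR hα) hs fun h => hαγ (eq_neg_of_add_eq_zero_right h),
      map_zero, map_zero, LinearMap.zero_apply]

theorem pairing_eq_zero_on_span_rootVectors {S : Set V} {g : L →ₗ[ℂ] L →ₗ[ℂ] ℂ}
    (hg : ∀ α ∈ S, ∀ β ∈ S, α + β ≠ 0 → g (X α) (X β) = 0)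
    {T : Set V} (hTS : T ⊆ S) {γ : V} (hγ : γ ∈ S) (hγT : ∀ δ ∈ T, γ + δ ≠ 0) {w : L}
    (hw : w ∈ span ℂ (X '' T)) : g w (X γ) = 0 := by
  refine LinearMap.eqOn_span (f := g.flip (X γ)) (g := 0) ?_ hw
  rintro _ ⟨δ, hδ, rfl⟩
  rw [LinearMap.flip_apply, hg δ (hTS hδ) γ hγ (add_comm γ δ ▸ hγT δ hδ), LinearMap.zero_apply]

end RootVectors

theorem LieAlgebra.koszul_eq_of_normal_pairings_vanish {K L : Type*} [Field K] [CharZero K]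
    [LieRing L] [LieAlgebra K L] {g : L →ₗ[K] L →ₗ[K] K} (hgsym : ∀ x y : L, g x y = g y x)
    {s : Set L} (hgnd : ∀ x ∈ span K s, (∀ z ∈ span K s, g x z = 0) → x = 0)
    {N : Submodule K L} (hNs : N ≤ span K s) {πm πn : L →ₗ[K] L} {U U' : L →ₗ[K] L →ₗ[K] L}
    (hUmem : ∀ x y : L, U x y ∈ span K s)
    (hU : ∀ x ∈ span K s, ∀ y ∈ span K s, ∀ z ∈ span K s,
      (2 : K) * g (U x y) z = g (πm ⁅z, x⁆) y + g x (πm ⁅z, y⁆))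
    (hU'mem : ∀ x y : L, U' x y ∈ N)
    (hU' : ∀ x ∈ N, ∀ y ∈ N, ∀ z ∈ N, (2 : K) * g (U' x y) z = g (πn ⁅z, x⁆) y + g x (πn ⁅z, y⁆))
    (hπ : ∀ z ∈ N, ∀ x ∈ N, πm ⁅z, x⁆ = πn ⁅z, x⁆)
    (hnormal : ∀ z ∈ s, z ∉ N → (∀ x ∈ N, ∀ y ∈ N, g (πm ⁅z, x⁆) y = 0) ∧ ∀ w ∈ N, g w z = 0)
    {x y : L} (hx : x ∈ N) (hy : y ∈ N) : U x y = U' x y := by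
  refine LinearMap.eq_of_pairing_eq_on_generators hgnd (hUmem x y) (hNs (hU'mem x y)) ?_
  intro z hz
  by_cases hzN : z ∈ N
  · refine mul_left_cancel₀ (two_ne_zero' K) ?_
    rw [hU x (hNs hx) y (hNs hy) z (subset_span hz), hU' x hx y hy z hzN, hπ z hzN x hx,
      hπ z hzN y hy]
  · obtain ⟨hlie, hpair⟩ := hnormal z hz hzN
    have h2U := hU x (hNs hx) y (hNs hy) z (subset_span hz)
    rw [hlie x hx y hy, hgsym x, hlie y hy x hx, add_zero, mul_eq_zero] at h2U
    rw [h2U.resolve_left two_ne_zero, hpair _ (hU'mem x y)]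

theorem stmt15_general
    (L : Type*) [LieRing L] [LieAlgebra ℂ L]
    (V : Type*) [AddCommGroup V] [DecidableEq V]
    (R : Finset V)
    (RΘ : Finset V)
    (RΘc : Finset V) (hRΘc : ∀ α, α ∈ RΘc ↔ α ∈ R ∧ α ∉ RΘ)
    (X H : V → L) (n : V → V → ℝ)
    (hbH : ∀ α ∈ R, ⁅X α, X (-α)⁆ = H α)
    (hbR : ∀ α ∈ R, ∀ β ∈ R, α + β ∈ R → ⁅X α, X β⁆ = (n α β : ℂ) • X (α + β))
    (hb0 : ∀ α ∈ R, ∀ β ∈ R, α + β ∉ R → α + β ≠ 0 → ⁅X α, X β⁆ = (0 : L))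
    (πm : L →ₗ[ℂ] L)
    (hπm1 : ∀ α ∈ RΘc, πm (X α) = X α)
    (hπm2 : ∀ α ∈ RΘ, πm (X α) = 0)
    (hπm3 : ∀ α ∈ R, πm (H α) = 0)
    (lam : V → ℝ)
    (g : L →ₗ[ℂ] L →ₗ[ℂ] ℂ) (hgsym : ∀ x y : L, g x y = g y x)
    (hg : ∀ α ∈ RΘc, ∀ β ∈ RΘc, g (X α) (X β) = if β = -α then (lam α : ℂ) else 0)
    (hgnd : ∀ x ∈ Submodule.span ℂ (X '' (RΘc : Set V)),
      (∀ z ∈ Submodule.span ℂ (X '' (RΘc : Set V)), g x z = 0) → x = 0)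
    (U : L →ₗ[ℂ] L →ₗ[ℂ] L)
    (hUmem : ∀ x y : L, U x y ∈ Submodule.span ℂ (X '' (RΘc : Set V)))
    (hU : ∀ x ∈ Submodule.span ℂ (X '' (RΘc : Set V)),
          ∀ y ∈ Submodule.span ℂ (X '' (RΘc : Set V)),
          ∀ z ∈ Submodule.span ℂ (X '' (RΘc : Set V)),
      (2 : ℂ) * g (U x y) z = g (πm ⁅z, x⁆) y + g x (πm ⁅z, y⁆))
    (Θ' : Finset V)
    (R' : Finset V)
    (hR' : ∀ α, α ∈ R' ↔ α ∈ R ∧ α ∈ AddSubgroup.closure (Θ' : Set V))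
    (R'c : Finset V) (hR'c : ∀ γ, γ ∈ R'c ↔ γ ∈ R' ∧ γ ∉ RΘ)
    (πn : L →ₗ[ℂ] L)
    (hπn1 : ∀ γ ∈ R'c, πn (X γ) = X γ)
    (hπn2 : ∀ γ ∈ R, γ ∉ R'c → πn (X γ) = 0)
    (hπn3 : ∀ α ∈ R, πn (H α) = 0)
    (U' : L →ₗ[ℂ] L →ₗ[ℂ] L)
    (hU'mem : ∀ x y : L, U' x y ∈ Submodule.span ℂ (X '' (R'c : Set V)))
    (hU' : ∀ x ∈ Submodule.span ℂ (X '' (R'c : Set V)),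
           ∀ y ∈ Submodule.span ℂ (X '' (R'c : Set V)),
           ∀ z ∈ Submodule.span ℂ (X '' (R'c : Set V)),
      (2 : ℂ) * g (U' x y) z = g (πn ⁅z, x⁆) y + g x (πn ⁅z, y⁆))
    :
    ∀ x ∈ Submodule.span ℂ (X '' (R'c : Set V)),
      ∀ y ∈ Submodule.span ℂ (X '' (R'c : Set V)),
        -(1/2 : ℂ) • πm ⁅x, y⁆ + U x y = -(1/2 : ℂ) • πn ⁅x, y⁆ + U' x y := by
  have hR'cR : (R'c : Set V) ⊆ R := fun δ hδ => ((hR' δ).1 ((hR'c δ).1 hδ).1).1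
  have hR'cA : (R'c : Set V) ⊆ AddSubgroup.closure (Θ' : Set V) :=
    fun δ hδ => ((hR' δ).1 ((hR'c δ).1 hδ).1).2
  have hR'cRΘc : (R'c : Set V) ⊆ RΘc :=
    fun δ hδ => (hRΘc δ).2 ⟨hR'cR hδ, ((hR'c δ).1 hδ).2⟩
  have hnormal : ∀ γ ∈ RΘc, γ ∉ R'c → ∀ v ∈ AddSubgroup.closure (Θ' : Set V), γ + v ≠ 0 := by
    intro γ hγ hγn v hv hsum
    obtain ⟨hγR, hγΘ⟩ := (hRΘc γ).1 hγ
    exact hγn ((hR'c γ).2 ⟨(hR' γ).2 ⟨hγR, eq_neg_of_add_eq_zero_left hsum ▸ neg_mem hv⟩, hγΘ⟩)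
  have hπX : ∀ δ ∈ R, δ ∈ AddSubgroup.closure (Θ' : Set V) → πm (X δ) = πn (X δ) := by
    intro δ hδ hδA
    by_cases hδΘ : δ ∈ RΘ
    · rw [hπm2 δ hδΘ, hπn2 δ hδ fun h => ((hR'c δ).1 h).2 hδΘ]
    · rw [hπm1 δ ((hRΘc δ).2 ⟨hδ, hδΘ⟩), hπn1 δ ((hR'c δ).2 ⟨(hR' δ).2 ⟨hδ, hδA⟩, hδΘ⟩)]
  have hbR' : ∀ α ∈ R, ∀ β ∈ R, α + β ∈ R → ∃ c : ℂ, ⁅X α, X β⁆ = c • X (α + β) :=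
    fun α hα β hβ hs => ⟨_, hbR α hα β hβ hs⟩
  have hπ : ∀ x ∈ span ℂ (X '' (R'c : Set V)), ∀ y ∈ span ℂ (X '' (R'c : Set V)),
      πm ⁅x, y⁆ = πn ⁅x, y⁆ := fun x hx y hy =>
    map_lie_eq_on_span_rootVectors hbH hbR' hb0 _ (fun α hα => by rw [hπm3 α hα, hπn3 α hα])
      hπX hR'cR hR'cA hx hy
  have hπm0 : ∀ δ ∈ R, δ ∉ (RΘc : Set V) → πm (X δ) = 0 :=
    fun δ hδ hδc => hπm2 δ (by_contra fun h => hδc ((hRΘc δ).2 ⟨hδ, h⟩))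
  have hgX : ∀ α ∈ (RΘc : Set V), ∀ β ∈ (RΘc : Set V), α + β ≠ 0 → g (X α) (X β) = 0 :=
    fun α hα β hβ hαβ => by rw [hg α hα β hβ, if_neg fun h => hαβ (by rw [h, add_neg_cancel])]
  intro x hx y hy
  rw [hπ x hx y hy, LieAlgebra.koszul_eq_of_normal_pairings_vanish hgsym hgnd
    (span_mono (Set.image_mono hR'cRΘc)) hUmem hU hU'mem hU' hπ ?_ hx hy]
  rintro _ ⟨γ, hγ, rfl⟩ hγn
  have hγA := hnormal γ hγ fun h => hγn (subset_span ⟨γ, h, rfl⟩)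
  exact ⟨fun x hx y hy => pairing_proj_lie_eq_zero_on_span_rootVectors hbH hbR' hb0 hπm3 hπm1
      hπm0 hgX hR'cR hR'cRΘc ((hRΘc γ).1 hγ).1
      (fun α hα β hβ => add_assoc γ α β ▸ hγA _ (add_mem (hR'cA hα) (hR'cA hβ))) hx hy,
    fun w hw => pairing_eq_zero_on_span_rootVectors hgX hR'cRΘc hγ
      (fun δ hδ => hγA δ (hR'cA hδ)) hw⟩

theorem stmt15
    (L : Type*) [LieRing L] [LieAlgebra ℂ L]
    (V : Type*) [AddCommGroup V] [DecidableEq V]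
    (R : Finset V) (hR0 : (0 : V) ∉ R) (hRneg : ∀ α ∈ R, -α ∈ R)
    (Rpos : Finset V) (hposR : Rpos ⊆ R)
    (hposneg : ∀ α ∈ R, α ∈ Rpos ↔ -α ∉ Rpos)
    (Sig : Finset V) (hSigpos : Sig ⊆ Rpos)
    (Θ : Finset V) (hΘSig : Θ ⊆ Sig)
    (RΘ : Finset V)
    (hRΘ : ∀ α, α ∈ RΘ ↔ α ∈ R ∧ α ∈ AddSubgroup.closure (Θ : Set V))
    (RΘc : Finset V) (hRΘc : ∀ α, α ∈ RΘc ↔ α ∈ R ∧ α ∉ RΘ)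
    (X H : V → L) (n : V → V → ℝ)
    (hbH : ∀ α ∈ R, ⁅X α, X (-α)⁆ = H α)
    (hbR : ∀ α ∈ R, ∀ β ∈ R, α + β ∈ R → ⁅X α, X β⁆ = (n α β : ℂ) • X (α + β))
    (hb0 : ∀ α ∈ R, ∀ β ∈ R, α + β ∉ R → α + β ≠ 0 → ⁅X α, X β⁆ = (0 : L))
    (hn1 : ∀ α β : V, n α β = - n β α)
    (hn2 : ∀ α β : V, n α β = - n (-α) (-β))
    (hn3 : ∀ α β γ : V, α + β + γ = 0 → n α β = n β γ ∧ n β γ = n γ α)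
    (πm : L →ₗ[ℂ] L)
    (hπm1 : ∀ α ∈ RΘc, πm (X α) = X α)
    (hπm2 : ∀ α ∈ RΘ, πm (X α) = 0)
    (hπm3 : ∀ α ∈ R, πm (H α) = 0)
    (lam : V → ℝ) (hlam1 : ∀ α ∈ RΘc, 0 < lam α) (hlam2 : ∀ α : V, lam (-α) = lam α)
    (g : L →ₗ[ℂ] L →ₗ[ℂ] ℂ) (hgsym : ∀ x y : L, g x y = g y x)
    (hg : ∀ α ∈ RΘc, ∀ β ∈ RΘc, g (X α) (X β) = if β = -α then (lam α : ℂ) else 0)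
    (hgnd : ∀ x ∈ Submodule.span ℂ (X '' (RΘc : Set V)),
      (∀ z ∈ Submodule.span ℂ (X '' (RΘc : Set V)), g x z = 0) → x = 0)
    (U : L →ₗ[ℂ] L →ₗ[ℂ] L) (hUsym : ∀ x y : L, U x y = U y x)
    (hUmem : ∀ x y : L, U x y ∈ Submodule.span ℂ (X '' (RΘc : Set V)))
    (hU : ∀ x ∈ Submodule.span ℂ (X '' (RΘc : Set V)),
          ∀ y ∈ Submodule.span ℂ (X '' (RΘc : Set V)),
          ∀ z ∈ Submodule.span ℂ (X '' (RΘc : Set V)),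
      (2 : ℂ) * g (U x y) z = g (πm ⁅z, x⁆) y + g x (πm ⁅z, y⁆))
    (Θ' : Finset V) (hΘ'Sig : Θ' ⊆ Sig) (hΘ'Θ : ¬ Θ' ⊆ Θ)
    (R' : Finset V)
    (hR' : ∀ α, α ∈ R' ↔ α ∈ R ∧ α ∈ AddSubgroup.closure (Θ' : Set V))
    (R'c : Finset V) (hR'c : ∀ γ, γ ∈ R'c ↔ γ ∈ R' ∧ γ ∉ RΘ)
    (πn : L →ₗ[ℂ] L)
    (hπn1 : ∀ γ ∈ R'c, πn (X γ) = X γ)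
    (hπn2 : ∀ γ ∈ R, γ ∉ R'c → πn (X γ) = 0)
    (hπn3 : ∀ α ∈ R, πn (H α) = 0)
    (U' : L →ₗ[ℂ] L →ₗ[ℂ] L) (hU'sym : ∀ x y : L, U' x y = U' y x)
    (hU'mem : ∀ x y : L, U' x y ∈ Submodule.span ℂ (X '' (R'c : Set V)))
    (hU' : ∀ x ∈ Submodule.span ℂ (X '' (R'c : Set V)),
           ∀ y ∈ Submodule.span ℂ (X '' (R'c : Set V)),
           ∀ z ∈ Submodule.span ℂ (X '' (R'c : Set V)),
      (2 : ℂ) * g (U' x y) z = g (πn ⁅z, x⁆) y + g x (πn ⁅z, y⁆))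
    (hgnd' : ∀ x ∈ Submodule.span ℂ (X '' (R'c : Set V)),
      (∀ z ∈ Submodule.span ℂ (X '' (R'c : Set V)), g x z = 0) → x = 0)
    :
    ∀ x ∈ Submodule.span ℂ (X '' (R'c : Set V)),
      ∀ y ∈ Submodule.span ℂ (X '' (R'c : Set V)),
        -(1/2 : ℂ) • πm ⁅x, y⁆ + U x y = -(1/2 : ℂ) • πn ⁅x, y⁆ + U' x y :=
  stmt15_general L V R RΘ RΘc hRΘc X H n hbH hbR hb0 πm hπm1 hπm2 hπm3 lam g hgsym hg hgnd U hUmem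
    hU Θ' R' hR' R'c hR'c πn hπn1 hπn2 hπn3 U' hU'mem hU'
end
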